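/- arXiv:2505.21379 — 9 statements merged into one kernel-verified Lean document; each statement's English description precedes it below -/
import Mathlib

section
/- Let v₁, v₂ be linearly independent vectors of ℝ² and let Λ = ℤv₁ + ℤv₂ be the lattice they generate. Let f : ℝ² → ℝ² be the rotation of angle θ about a center c, i.e. f(v) = R(v − c) + c where R is the linear rotation by angle θ. If f(Λ) = Λ, then 2·cos θ is an integer; equivalently, θ is congruent modulo 2π to one of 0, ±π/3, ±π/2, ±2π/3, π (so f is a rotation of order n with n ∈ {1, 2, 3, 4, 6}). -/
/-- Crystallographic restriction: if a rotation of the plane preserves a lattice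
`Λ = ℤv₁ + ℤv₂` (with `v₁, v₂` linearly independent), then `2·cos θ` is an integer. -/
theorem stmt0 (v₁ v₂ : ℝ × ℝ) (hind : LinearIndependent ℝ ![v₁, v₂])
    (θ : ℝ) (c : ℝ × ℝ) (f : ℝ × ℝ → ℝ × ℝ)
    (hf : ∀ v : ℝ × ℝ,
      f v = (Real.cos θ * (v.1 - c.1) - Real.sin θ * (v.2 - c.2) + c.1,
             Real.sin θ * (v.1 - c.1) + Real.cos θ * (v.2 - c.2) + c.2))
    (Λ : Set (ℝ × ℝ)) (hΛ : Λ = {v | ∃ m n : ℤ, v = m • v₁ + n • v₂})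
    (hinv : f '' Λ = Λ) :
    ∃ n : ℤ, 2 * Real.cos θ = n := by
  have h0 : (0 : ℝ × ℝ) ∈ Λ := by rw [hΛ]; exact ⟨0, 0, by simp⟩
  have h1 : v₁ ∈ Λ := by rw [hΛ]; exact ⟨1, 0, by simp⟩
  have h2 : v₂ ∈ Λ := by rw [hΛ]; exact ⟨0, 1, by simp⟩
  have hf0 : f 0 ∈ Λ := hinv ▸ Set.mem_image_of_mem f h0
  have hf1 : f v₁ ∈ Λ := hinv ▸ Set.mem_image_of_mem f h1
  have hf2 : f v₂ ∈ Λ := hinv ▸ Set.mem_image_of_mem f h2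
  rw [hΛ] at hf0 hf1 hf2
  obtain ⟨m₀, n₀, e0⟩ := hf0
  obtain ⟨m₁, n₁, e1⟩ := hf1
  obtain ⟨m₂, n₂, e2⟩ := hf2
  rw [hf] at e0 e1 e2
  simp only [Prod.ext_iff, Prod.fst_add, Prod.snd_add, Prod.smul_fst, Prod.smul_snd,
    Prod.fst_zero, Prod.snd_zero] at e0 e1 e2
  simp only [zsmul_eq_mul] at e0 e1 e2
  have hD : v₁.1 * v₂.2 - v₁.2 * v₂.1 ≠ 0 := by
    intro h
    rw [LinearIndependent.pair_iff] at hind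
    have key2 : ∀ s t : ℝ, s * v₁.1 + t * v₂.1 = 0 → s * v₁.2 + t * v₂.2 = 0 →
        s = 0 ∧ t = 0 := fun s t hA hB =>
      hind s t (Prod.ext (by simpa using hA) (by simpa using hB))
    have hy := key2 v₂.2 (-v₁.2) (by nlinarith) (by ring)
    have hx := key2 v₂.1 (-v₁.1) (by ring) (by nlinarith [hy.1, hy.2])
    have := key2 1 0 (by nlinarith [hx.1, hx.2]) (by nlinarith [hy.1, hy.2])
    exact one_ne_zero this.1
  refine ⟨(m₁ - m₀) + (n₂ - n₀), ?_⟩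
  have key : 2 * Real.cos θ * (v₁.1 * v₂.2 - v₁.2 * v₂.1) =
      (((m₁ - m₀) + (n₂ - n₀) : ℤ) : ℝ) * (v₁.1 * v₂.2 - v₁.2 * v₂.1) := by
    push_cast
    linear_combination v₂.2 * e1.1 - v₂.1 * e1.2 - v₁.2 * e2.1 + v₁.1 * e2.2 +
      (v₁.2 - v₂.2) * e0.1 + (v₂.1 - v₁.1) * e0.2
  exact mul_right_cancel₀ hD key
end

section
/- Let m ∈ (0,1) be irrational. Define f : ℝ² → ℝ by f(x,y) = (x + m·y)/√(1 + m²) (the coordinate of the orthogonal projection onto the line y = m·x), and let Γ := {(p,q) ∈ ℤ² : q ≥ m·p and there exist a ∈ {p−1, p} and b ∈ {q−1, q} with m·a ≤ b + 1 and m·(a+1) ≥ b} (the lattice points lying on or above the line y = m·x that are vertices of a unit cell of ℤ² meeting that line). Then the set S := f(Γ) ⊆ ℝ is not periodic: there is no real τ ≠ 0 with {s + τ : s ∈ S} = S. -/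
/-!
Up to the factor `√(1 + m²)`, `S` consists of the numbers `p + m q` with `(p, q) ∈ Γ`, and `Γ`
lies in the strip `0 ≤ q - m p ≤ m + 1`. Since `m` is irrational, `p + m q` determines `(p, q)`,
so translating by a period `τ ≠ 0` shifts the internal coordinate `q - m p` of every point by
the same nonzero amount `d`; `N` translations with `N |d|` larger than the width of the strip
leave it, a contradiction.
-/

open Set

theorem Irrational.mul_intCast_eq_intCast_iff {m : ℝ} (hm : Irrational m) {a b : ℤ} :
    m * a = b ↔ a = 0 ∧ b = 0 := by
  refine ⟨fun h => ?_, by rintro ⟨rfl, rfl⟩; simp⟩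
  have ha : a = 0 := by_contra fun ha => (hm.mul_intCast ha).ne_int b h
  exact ⟨ha, by simpa [ha, eq_comm] using h⟩

theorem Irrational.not_image_add_subset_of_strip {m c C τ : ℝ} (hm : Irrational m) (hc : c ≠ 0)
    {Γ : Set (ℤ × ℤ)} (hne : Γ.Nonempty) (hstrip : ∀ pq ∈ Γ, |(pq.2 : ℝ) - m * pq.1| ≤ C)
    (hτ : τ ≠ 0) :
    ¬ (· + τ) '' ((fun pq : ℤ × ℤ => ((pq.1 : ℝ) + m * pq.2) / c) '' Γ) ⊆
      (fun pq : ℤ × ℤ => ((pq.1 : ℝ) + m * pq.2) / c) '' Γ := by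
  intro hsub
  obtain ⟨⟨p₀, q₀⟩, h₀⟩ := hne
  have hiter (n : ℕ) : ∃ p q : ℤ, (p, q) ∈ Γ ∧ (p + m * q : ℝ) = p₀ + m * q₀ + n * (τ * c) := by
    obtain ⟨⟨p, q⟩, hpq, h⟩ := (mapsTo_iff_image_subset.mpr hsub).iterate n (mem_image_of_mem _ h₀)
    refine ⟨p, q, hpq, ?_⟩
    simp only [add_right_iterate_apply, nsmul_eq_mul] at h
    field_simp at h
    linear_combination h
  obtain ⟨p₁, q₁, -, h₁⟩ := hiter 1
  rw [Nat.cast_one, one_mul] at h₁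
  set d : ℝ := ((q₁ : ℝ) - m * p₁) - ((q₀ : ℝ) - m * p₀) with hd_def
  have hd : d ≠ 0 := by
    intro hd
    obtain ⟨hp, hq⟩ := (hm.mul_intCast_eq_intCast_iff (a := p₁ - p₀) (b := q₁ - q₀)).mp
      (by push_cast; linear_combination -hd)
    obtain rfl : p₁ = p₀ := by omega
    obtain rfl : q₁ = q₀ := by omega
    exact mul_ne_zero hτ hc (by linarith)
  obtain ⟨N, hN⟩ := exists_nat_gt (2 * C / |d|)
  obtain ⟨p, q, hpq, hN'⟩ := hiter N
  obtain ⟨hq, hp⟩ := (hm.mul_intCast_eq_intCast_iff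
      (a := q - q₀ - N * (q₁ - q₀)) (b := p₀ + N * (p₁ - p₀) - p)).mp
    (by push_cast; linear_combination hN' - N * h₁)
  have hNd : (N : ℝ) * d = ((q : ℝ) - m * p) - ((q₀ : ℝ) - m * p₀) := by
    rw [show q = q₀ + N * (q₁ - q₀) by omega, show p = p₀ + N * (p₁ - p₀) by omega]
    push_cast; ring
  have hNC : (N : ℝ) * |d| ≤ 2 * C := by
    rw [← Nat.abs_cast, ← abs_mul, hNd]
    linarith [abs_sub ((q : ℝ) - m * p) ((q₀ : ℝ) - m * p₀), hstrip _ hpq, hstrip _ h₀]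
  rw [div_lt_iff₀ (abs_pos.mpr hd)] at hN
  linarith

theorem abs_sub_mul_le_of_cell_vertex {m : ℝ} (hm : 0 ≤ m) {p q a b : ℤ} (hpq : m * p ≤ q)
    (ha : a ∈ ({p - 1, p} : Set ℤ)) (hb : b ∈ ({q - 1, q} : Set ℤ)) (hab : (b : ℝ) ≤ m * (a + 1)) :
    |(q : ℝ) - m * p| ≤ m + 1 := by
  have hap : (a : ℝ) ≤ p := by exact_mod_cast (by rcases ha with rfl | rfl <;> simp)
  have hbq : (q : ℝ) ≤ b + 1 := by exact_mod_cast (by rcases hb with rfl | rfl <;> simp)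
  rw [abs_le]
  constructor <;> nlinarith

theorem stmt1_general (m : ℝ) (hm0 : 0 < m) (hirr : Irrational m)
    (f : ℝ → ℝ → ℝ) (hf : ∀ x y : ℝ, f x y = (x + m * y) / Real.sqrt (1 + m ^ 2))
    (Γ : Set (ℤ × ℤ))
    (hΓ : Γ = {pq : ℤ × ℤ | m * (pq.1 : ℝ) ≤ (pq.2 : ℝ) ∧
      ∃ a ∈ ({pq.1 - 1, pq.1} : Set ℤ), ∃ b ∈ ({pq.2 - 1, pq.2} : Set ℤ),
        m * (a : ℝ) ≤ (b : ℝ) + 1 ∧ (b : ℝ) ≤ m * ((a : ℝ) + 1)})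
    (S : Set ℝ) (hS : S = (fun pq : ℤ × ℤ => f (pq.1 : ℝ) (pq.2 : ℝ)) '' Γ) :
    ¬ ∃ τ : ℝ, τ ≠ 0 ∧ (fun s => s + τ) '' S = S := by
  rintro ⟨τ, hτ, hper⟩
  obtain rfl : f = fun x y => (x + m * y) / Real.sqrt (1 + m ^ 2) := funext₂ hf
  have hzero : ((0, 0) : ℤ × ℤ) ∈ Γ := by
    rw [hΓ]
    exact ⟨by simp, 0, by simp, 0, by simp, by simp, by simpa using hm0.le⟩
  have hstrip : ∀ pq ∈ Γ, |(pq.2 : ℝ) - m * pq.1| ≤ m + 1 := by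
    rw [hΓ]
    rintro ⟨p, q⟩ ⟨hpq, a, ha, b, hb, -, hab⟩
    exact abs_sub_mul_le_of_cell_vertex hm0.le hpq ha hb hab
  subst hS
  exact hirr.not_image_add_subset_of_strip (by positivity) ⟨_, hzero⟩ hstrip hτ hper.subset

/-- Cut-and-project: for an irrational slope `m ∈ (0,1)`, the projection onto the line
`y = m·x` of the upper vertices of the lattice cells meeting the line is not periodic. -/
theorem stmt1 (m : ℝ) (hm0 : 0 < m) (hm1 : m < 1) (hirr : Irrational m)
    (f : ℝ → ℝ → ℝ) (hf : ∀ x y : ℝ, f x y = (x + m * y) / Real.sqrt (1 + m ^ 2))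
    (Γ : Set (ℤ × ℤ))
    (hΓ : Γ = {pq : ℤ × ℤ | m * (pq.1 : ℝ) ≤ (pq.2 : ℝ) ∧
      ∃ a ∈ ({pq.1 - 1, pq.1} : Set ℤ), ∃ b ∈ ({pq.2 - 1, pq.2} : Set ℤ),
        m * (a : ℝ) ≤ (b : ℝ) + 1 ∧ (b : ℝ) ≤ m * ((a : ℝ) + 1)})
    (S : Set ℝ) (hS : S = (fun pq : ℤ × ℤ => f (pq.1 : ℝ) (pq.2 : ℝ)) '' Γ) :
    ¬ ∃ τ : ℝ, τ ≠ 0 ∧ (fun s => s + τ) '' S = S :=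
  stmt1_general m hm0 hirr f hf Γ hΓ S hS
end

section
/- Let C be a finite set of colors and P ⊆ C⁴ a Wang protoset. If there exists a periodic Wang tiling with protoset P, then there exists a bi-periodic Wang tiling with protoset P. -/
/-- A Wang tile over a color set `C` is a quadruple `(n, s, w, e)`. -/
abbrev WangTile (C : Type*) := C × C × C × C

theorem main_lemma {C : Type*} [Fintype C] (P : Set (WangTile C))
    (t : ℤ × ℤ → WangTile C) (ht : ∀ ij : ℤ × ℤ, t ij ∈ P)
    (hmatch : ∀ i j : ℤ, (t (i, j)).2.2.2 = (t (i + 1, j)).2.2.1 ∧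
      (t (i, j)).1 = (t (i, j + 1)).2.1)
    (a b : ℤ) (hb : 0 < b)
    (hper : ∀ i j : ℤ, t (i + a, j + b) = t (i, j)) :
    ∃ t' : ℤ × ℤ → WangTile C, (∀ ij : ℤ × ℤ, t' ij ∈ P) ∧
      (∀ i j : ℤ, (t' (i, j)).2.2.2 = (t' (i + 1, j)).2.2.1 ∧
        (t' (i, j)).1 = (t' (i, j + 1)).2.1) ∧
      ∃ a' b' : ℤ, a' ≠ 0 ∧ b' ≠ 0 ∧
        ∀ i j : ℤ, t' (i + a', j) = t' (i, j) ∧ t' (i, j + b') = t' (i, j) := by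
  -- choose a window length L ≥ 1 with -L ≤ a ≤ L
  obtain ⟨L, hL1, haL, haL'⟩ : ∃ L : ℤ, 1 ≤ L ∧ a ≤ L ∧ -a ≤ L := by
    refine ⟨|a| + 1, ?_, ?_, ?_⟩
    · have := abs_nonneg a; omega
    · have := le_abs_self a; omega
    · have := neg_le_abs a; omega
  have hL0 : 0 ≤ L := by omega
  -- pigeonhole on windows of L+1 consecutive columns of the base strip
  set W : ℤ → (Fin b.toNat → Fin (L + 1).toNat → WangTile C) :=
    fun i r s => t (i + (s : ℤ), (r : ℤ)) with hWdef
  obtain ⟨i0, i1, hlt, hW⟩ : ∃ i0 i1 : ℤ, i0 < i1 ∧ W i0 = W i1 := by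
    obtain ⟨x, y, hne, hW⟩ := Finite.exists_ne_map_eq_of_infinite W
    rcases lt_or_gt_of_ne hne with h | h
    · exact ⟨x, y, h, hW⟩
    · exact ⟨y, x, h, hW.symm⟩
  set p : ℤ := i1 - i0 with hpdef
  have hp : 0 < p := by omega
  -- the column repetition fact from pigeonhole
  have hH : ∀ e r : ℤ, 0 ≤ e → e ≤ L → 0 ≤ r → r < b → t (i0 + e, r) = t (i0 + p + e, r) := by
    intro e r he heL hr hrb
    have h1 := congrFun (congrFun hW ⟨r.toNat, by omega⟩) ⟨e.toNat, by omega⟩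
    simp only [hWdef] at h1
    rw [Int.toNat_of_nonneg he, Int.toNat_of_nonneg hr] at h1
    rw [show i0 + p + e = i1 + e by omega]
    exact h1
  -- key: wrapping modulo p doesn't change columns, within the window range
  have key : ∀ n : ℕ, ∀ x r : ℤ, x = (n : ℤ) → x ≤ L + p → 0 ≤ r → r < b →
      t (i0 + x % p, r) = t (i0 + x, r) := by
    intro n
    induction n using Nat.strong_induction_on with
    | _ n ih =>
      intro x r hxn hxL hr hrb
      have hx0 : 0 ≤ x := by omega
      by_cases hxp : x < p
      · rw [Int.emod_eq_of_lt hx0 hxp]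
      · push_neg at hxp
        have hsub : (x - p) % p = x % p := by
          rw [Int.sub_emod, Int.emod_self, sub_zero, Int.emod_emod_of_dvd _ dvd_rfl]
        have h1 := ih (x - p).toNat (by omega) (x - p) r (by omega) (by omega) hr hrb
        rw [hsub] at h1
        rw [h1]
        have h2 := hH (x - p) r (by omega) (by omega) hr hrb
        rw [show i0 + p + (x - p) = i0 + x by ring] at h2
        rw [show i0 + (x - p) = i0 + x - p by ring] at h2 ⊢
        exact h2
  -- the periodized column assignment
  set φ : ℤ → ℤ := fun k => i0 + (k - i0) % p with hφdef
  have hφper : ∀ k n : ℤ, φ (k + n * p) = φ k := by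
    intro k n
    simp only [hφdef]
    rw [show k + n * p - i0 = (k - i0) + p * n by ring, Int.add_mul_emod_self_left]
  -- window property: each window of the periodized strip occurs in the original strip
  have window : ∀ k : ℤ, ∃ m : ℤ, ∀ s r : ℤ, 0 ≤ s → s ≤ L → 0 ≤ r → r < b →
      t (φ (k + s), r) = t (m + s, r) := by
    intro k
    set d : ℤ := (k - i0) % p with hddef
    have hd0 : 0 ≤ d := Int.emod_nonneg _ hp.ne'
    have hdp : d < p := Int.emod_lt_of_pos _ hp
    refine ⟨i0 + d, fun s r hs hsL hr hrb => ?_⟩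
    have hφv : φ (k + s) = i0 + (d + s) % p := by
      simp only [hφdef, hddef]
      rw [show k + s - i0 = (k - i0) + s by ring, ← Int.emod_add_emod]
    rw [hφv]
    have := key (d + s).toNat (d + s) r (by omega) (by omega) hr hrb
    rw [this, show i0 + (d + s) = i0 + d + s by ring]
  -- the periodized columns
  set v : ℤ → ℤ → WangTile C := fun k r => t (φ k, r) with hvdef
  have hvP : ∀ k r, v k r ∈ P := fun k r => ht _
  have hvper : ∀ k n r : ℤ, v (k + n * p) r = v k r := by
    intro k n r; simp only [hvdef, hφper]
  have hvh : ∀ k r : ℤ, 0 ≤ r → r < b → (v k r).2.2.2 = (v (k + 1) r).2.2.1 := by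
    intro k r hr hrb
    obtain ⟨m, hm⟩ := window k
    have h0 := hm 0 r le_rfl hL0 hr hrb
    have h1 := hm 1 r zero_le_one hL1 hr hrb
    rw [add_zero] at h0
    simp only [hvdef]
    rw [h0, h1, add_zero]
    exact (hmatch m r).1
  have hvv : ∀ k r : ℤ, 0 ≤ r → r + 1 < b → (v k r).1 = (v k (r + 1)).2.1 := by
    intro k r hr hrb
    simp only [hvdef]
    exact (hmatch (φ k) r).2
  -- the general vertical wrap fact for the original tiling
  have G : ∀ x : ℤ, (t (x, b - 1)).1 = (t (x - a, 0)).2.1 := by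
    intro x
    have h1 := (hmatch x (b - 1)).2
    have h2 := hper (x - a) 0
    rw [show x - a + a = x by ring, zero_add] at h2
    rw [show b - 1 + 1 = b by ring] at h1
    rw [h1, h2]
  have hvw : ∀ k : ℤ, (v k (b - 1)).1 = (v (k - a) 0).2.1 := by
    intro k
    obtain ⟨m, hm⟩ := window (k - max a 0)
    have h1 := hm (max a 0) (b - 1) (le_max_right a 0) (by omega) (by omega) (by omega)
    have h2 := hm (max (-a) 0) 0 (le_max_right (-a) 0) (by omega) le_rfl hb
    rw [show k - max a 0 + max a 0 = k by ring] at h1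
    rw [show k - max a 0 + max (-a) 0 = k - a by omega] at h2
    simp only [hvdef]
    rw [h1, h2, show m + max (-a) 0 = (m + max a 0) - a by omega]
    exact G (m + max a 0)
  -- define the bi-periodic tiling
  refine ⟨fun ij => v (ij.1 - a * (ij.2 / b)) (ij.2 % b), fun ij => hvP _ _, ?_, p, b * p,
    hp.ne', (by positivity), ?_⟩
  · intro i j
    have hr0 : 0 ≤ j % b := Int.emod_nonneg j hb.ne'
    have hrb : j % b < b := Int.emod_lt_of_pos j hb
    constructor
    · have := hvh (i - a * (j / b)) (j % b) hr0 hrb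
      rwa [show i - a * (j / b) + 1 = i + 1 - a * (j / b) by ring] at this
    · by_cases hcase : j % b + 1 < b
      · have hd : (j + 1) / b = j / b := by
          conv_lhs => rw [show j + 1 = (j % b + 1) + b * (j / b) by
            have := Int.mul_ediv_add_emod j b; ring_nf; omega]
          rw [Int.add_mul_ediv_left _ _ hb.ne', Int.ediv_eq_zero_of_lt (by omega) hcase, zero_add]
        have hm : (j + 1) % b = j % b + 1 := by
          conv_lhs => rw [show j + 1 = (j % b + 1) + b * (j / b) by
            have := Int.mul_ediv_add_emod j b; ring_nf; omega]
          rw [Int.add_mul_emod_self_left, Int.emod_eq_of_lt (by omega) hcase]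
        show (v _ _).1 = (v (i - a * ((j+1)/b)) ((j+1) % b)).2.1
        rw [hd, hm]
        exact hvv _ _ hr0 hcase
      · have hrb1 : j % b = b - 1 := by omega
        have hexp : b * (j / b + 1) = b * (j / b) + b := by ring
        have hd : (j + 1) / b = j / b + 1 := by
          conv_lhs => rw [show j + 1 = b * (j / b + 1) by
            have := Int.mul_ediv_add_emod j b; omega]
          rw [Int.mul_ediv_cancel_left _ hb.ne']
        have hm : (j + 1) % b = 0 := by
          conv_lhs => rw [show j + 1 = b * (j / b + 1) by
            have := Int.mul_ediv_add_emod j b; omega]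
          rw [Int.mul_emod_right]
        show (v _ _).1 = (v (i - a * ((j+1)/b)) ((j+1) % b)).2.1
        rw [hd, hm, hrb1, show i - a * (j / b + 1) = (i - a * (j / b)) - a by ring]
        exact hvw (i - a * (j / b))
  · intro i j
    constructor
    · show v (i + p - a * (j / b)) (j % b) = v (i - a * (j / b)) (j % b)
      rw [show i + p - a * (j / b) = (i - a * (j / b)) + 1 * p by ring]
      exact hvper _ 1 _
    · show v (i - a * ((j + b * p) / b)) ((j + b * p) % b) = v (i - a * (j / b)) (j % b)
      rw [Int.add_mul_ediv_left _ _ hb.ne', Int.add_mul_emod_self_left,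
        show i - a * (j / b + p) = (i - a * (j / b)) + (-a) * p by ring]
      exact hvper _ (-a) _

/-- Transposing/reflecting a tile: `(n,s,w,e) ↦ (e,w,s,n)`. -/
def tileFlip {C : Type*} (x : WangTile C) : WangTile C := (x.2.2.2, x.2.2.1, x.2.1, x.1)

theorem main_lemma' {C : Type*} [Fintype C] (P : Set (WangTile C))
    (t : ℤ × ℤ → WangTile C) (ht : ∀ ij : ℤ × ℤ, t ij ∈ P)
    (hmatch : ∀ i j : ℤ, (t (i, j)).2.2.2 = (t (i + 1, j)).2.2.1 ∧
      (t (i, j)).1 = (t (i, j + 1)).2.1)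
    (a b : ℤ) (hb : b ≠ 0)
    (hper : ∀ i j : ℤ, t (i + a, j + b) = t (i, j)) :
    ∃ t' : ℤ × ℤ → WangTile C, (∀ ij : ℤ × ℤ, t' ij ∈ P) ∧
      (∀ i j : ℤ, (t' (i, j)).2.2.2 = (t' (i + 1, j)).2.2.1 ∧
        (t' (i, j)).1 = (t' (i, j + 1)).2.1) ∧
      ∃ a' b' : ℤ, a' ≠ 0 ∧ b' ≠ 0 ∧
        ∀ i j : ℤ, t' (i + a', j) = t' (i, j) ∧ t' (i, j + b') = t' (i, j) := by
  rcases hb.lt_or_gt with h | h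
  · refine main_lemma P t ht hmatch (-a) (-b) (by omega) ?_
    intro i j
    have h1 := hper (i - a) (j - b)
    rw [show i - a + a = i by ring, show j - b + b = j by ring] at h1
    rw [show i + -a = i - a by ring, show j + -b = j - b by ring, h1]
  · exact main_lemma P t ht hmatch a b h hper

/-- If there exists a periodic Wang tiling with protoset `P`, then there exists a
bi-periodic Wang tiling with the same protoset. -/
theorem stmt2 {C : Type*} [Fintype C] (P : Set (WangTile C))
    (t : ℤ × ℤ → WangTile C) (ht : ∀ ij : ℤ × ℤ, t ij ∈ P)
    (hmatch : ∀ i j : ℤ, (t (i, j)).2.2.2 = (t (i + 1, j)).2.2.1 ∧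
      (t (i, j)).1 = (t (i, j + 1)).2.1)
    (a b : ℤ) (hab : (a, b) ≠ (0, 0))
    (hper : ∀ i j : ℤ, t (i + a, j + b) = t (i, j)) :
    ∃ t' : ℤ × ℤ → WangTile C, (∀ ij : ℤ × ℤ, t' ij ∈ P) ∧
      (∀ i j : ℤ, (t' (i, j)).2.2.2 = (t' (i + 1, j)).2.2.1 ∧
        (t' (i, j)).1 = (t' (i, j + 1)).2.1) ∧
      ∃ a' b' : ℤ, a' ≠ 0 ∧ b' ≠ 0 ∧
        ∀ i j : ℤ, t' (i + a', j) = t' (i, j) ∧ t' (i, j + b') = t' (i, j) := by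
  by_cases hb : b ≠ 0
  · exact main_lemma' P t ht hmatch a b hb hper
  · push_neg at hb
    subst hb
    have ha : a ≠ 0 := by simpa using hab
    -- transpose the tiling
    set s : ℤ × ℤ → WangTile C := fun ij => tileFlip (t (ij.2, ij.1)) with hsdef
    have hsP : ∀ ij : ℤ × ℤ, s ij ∈ tileFlip '' P := fun ij => ⟨t (ij.2, ij.1), ht _, rfl⟩
    have hsmatch : ∀ i j : ℤ, (s (i, j)).2.2.2 = (s (i + 1, j)).2.2.1 ∧
        (s (i, j)).1 = (s (i, j + 1)).2.1 := by
      intro i j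
      simp only [hsdef, tileFlip]
      exact ⟨(hmatch j i).2, (hmatch j i).1⟩
    have hsper : ∀ i j : ℤ, s (i + 0, j + a) = s (i, j) := by
      intro i j
      exact congrArg tileFlip (hper j i)
    obtain ⟨s', hs'P, hs'match, a', b', ha', hb', hs'per⟩ :=
      main_lemma' (tileFlip '' P) s hsP hsmatch 0 a ha hsper
    refine ⟨fun ij => tileFlip (s' (ij.2, ij.1)), ?_, ?_, b', a', hb', ha', ?_⟩
    · intro ij
      obtain ⟨y, hy, hxy⟩ := hs'P (ij.2, ij.1)
      show tileFlip (s' (ij.2, ij.1)) ∈ P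
      rw [← hxy]
      exact hy
    · intro i j
      exact ⟨(hs'match j i).2, (hs'match j i).1⟩
    · intro i j
      exact ⟨congrArg tileFlip (hs'per j i).2, congrArg tileFlip (hs'per j i).1⟩
end

section
/- There exists a Wang tiling with Kari's 14-tile protoset P, i.e. a function t : ℤ² → P such that for all (i,j) ∈ ℤ²: e(t(i,j)) = w(t(i+1,j)) and n(t(i,j)) = s(t(i,j+1)). -/
/-- A Kari tile: north and south colors in `ℚ`, west and east colors in `ℚ × Bool`
(the Boolean tag distinguishes the two families, e.g. the colors `0` and `0'`). -/
abbrev KariTile := ℚ × ℚ × (ℚ × Bool) × (ℚ × Bool)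

namespace KariTile
def n (T : KariTile) : ℚ := T.1
def s (T : KariTile) : ℚ := T.2.1
def w (T : KariTile) : ℚ × Bool := T.2.2.1
def e (T : KariTile) : ℚ × Bool := T.2.2.2
end KariTile

/-- Kari's 14-tile protoset: the union of the 4 tiles of the family `T₂`
(multiplier 2) and the 10 tiles of the family `T_{2/3}` (multiplier 2/3). -/
def kariProtoset : Set KariTile :=
  {T | (T.w.2 = false ∧ T.e.2 = false ∧
        T.n ∈ ({0, 1} : Set ℚ) ∧ T.s ∈ ({1, 2} : Set ℚ) ∧
        T.w.1 ∈ ({-1, 0} : Set ℚ) ∧ T.e.1 ∈ ({-1, 0} : Set ℚ) ∧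
        2 * T.n + T.w.1 = T.s + T.e.1) ∨
       (T.w.2 = true ∧ T.e.2 = true ∧
        T.n ∈ ({1, 2} : Set ℚ) ∧ T.s ∈ ({0, 1, 2} : Set ℚ) ∧
        T.w.1 ∈ ({-1/3, 0, 1/3, 2/3} : Set ℚ) ∧ T.e.1 ∈ ({-1/3, 0, 1/3, 2/3} : Set ℚ) ∧
        (2/3) * T.n + T.w.1 = T.s + T.e.1)}

/-- `t : ℤ² → KariTile` is a Wang tiling with Kari's protoset. -/
def IsKariTiling (t : ℤ × ℤ → KariTile) : Prop :=
  (∀ ij : ℤ × ℤ, t ij ∈ kariProtoset) ∧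
  (∀ i j : ℤ, (t (i, j)).e = (t (i + 1, j)).w ∧ (t (i, j)).n = (t (i, j + 1)).s)

/-- The downward dynamics: multiply by 2 or 2/3. -/
def kf (y : ℚ) : ℚ := if y ≤ 1 then 2 * y else 2/3 * y

/-- A right inverse of `kf` on `(2/3, 2]`. -/
def kfinv (y : ℚ) : ℚ := if 4/3 < y then y / 2 else 3/2 * y

def kS (y : ℚ) : Prop := 2/3 < y ∧ y ≤ 2

lemma kS_f {y : ℚ} (h : kS y) : kS (kf y) := by
  obtain ⟨h1, h2⟩ := h
  unfold kf kS
  split <;> constructor <;> linarith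

lemma kS_finv {y : ℚ} (h : kS y) : kS (kfinv y) ∧ kf (kfinv y) = y := by
  obtain ⟨h1, h2⟩ := h
  unfold kfinv
  split
  · have hy : y / 2 ≤ 1 := by linarith
    refine ⟨⟨by linarith, by linarith⟩, ?_⟩
    unfold kf; rw [if_pos hy]; ring
  · have hy : ¬ (3/2 * y ≤ 1) := by push_neg; linarith
    refine ⟨⟨by linarith, by linarith⟩, ?_⟩
    unfold kf; rw [if_neg hy]; ring

/-- The bi-infinite orbit: row `j` carries the value `Y j`. -/
def Y (j : ℤ) : ℚ := if 0 ≤ j then kfinv^[j.toNat] 1 else kf^[(-j).toNat] 1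

lemma kS_finv_iter (n : ℕ) : kS (kfinv^[n] 1) := by
  induction n with
  | zero => exact ⟨by norm_num, by norm_num⟩
  | succ n ih => rw [Function.iterate_succ_apply']; exact (kS_finv ih).1

lemma kS_f_iter (n : ℕ) : kS (kf^[n] 1) := by
  induction n with
  | zero => exact ⟨by norm_num, by norm_num⟩
  | succ n ih => rw [Function.iterate_succ_apply']; exact kS_f ih

lemma kS_Y (j : ℤ) : kS (Y j) := by
  unfold Y; split
  · exact kS_finv_iter _
  · exact kS_f_iter _

lemma Y_step (j : ℤ) : Y (j - 1) = kf (Y j) := by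
  rcases lt_trichotomy j 1 with h | h | h
  · have hj : ¬ (0 ≤ j - 1) := by omega
    unfold Y
    rw [if_neg hj]
    by_cases h0 : 0 ≤ j
    · have hj0 : j = 0 := by omega
      subst hj0
      norm_num
    · rw [if_neg h0]
      have : (-(j - 1)).toNat = (-j).toNat + 1 := by omega
      rw [this, Function.iterate_succ_apply']
  · subst h
    unfold Y
    norm_num
    exact ((kS_finv (y := 1) ⟨by norm_num, by norm_num⟩).2).symm
  · have h1 : 0 ≤ j - 1 := by omega
    have h2 : 0 ≤ j := by omega
    unfold Y
    rw [if_pos h1, if_pos h2]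
    have : j.toNat = (j - 1).toNat + 1 := by omega
    rw [this, Function.iterate_succ_apply']
    exact ((kS_finv (kS_finv_iter _)).2).symm

lemma floor_diff_bounds {x z : ℚ} {lo hi : ℤ} (h1 : (lo : ℚ) ≤ z) (h2 : z ≤ hi) :
    lo ≤ ⌊x + z⌋ - ⌊x⌋ ∧ ⌊x + z⌋ - ⌊x⌋ ≤ hi := by
  constructor
  · have : ⌊x⌋ + lo ≤ ⌊x + z⌋ := by
      rw [← Int.floor_add_intCast x lo]
      exact Int.floor_mono (by linarith)
    omega
  · have : ⌊x + z⌋ ≤ ⌊x⌋ + hi := by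
      rw [← Int.floor_add_intCast x hi]
      exact Int.floor_mono (by linarith)
    omega

lemma carry2 (u : ℚ) : -1 ≤ 2 * ⌊u⌋ - ⌊2 * u⌋ ∧ 2 * ⌊u⌋ - ⌊2 * u⌋ ≤ 0 := by
  have h1 : (⌊u⌋ : ℚ) ≤ u := Int.floor_le u
  have h2 : u < ⌊u⌋ + 1 := Int.lt_floor_add_one u
  have h3 : 2 * ⌊u⌋ ≤ ⌊2 * u⌋ := by
    apply Int.le_floor.mpr
    push_cast
    linarith
  have h4 : ⌊2 * u⌋ < 2 * ⌊u⌋ + 2 := by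
    apply Int.floor_lt.mpr
    push_cast
    linarith
  omega

lemma carry23 (u : ℚ) : -1 ≤ 2 * ⌊u⌋ - 3 * ⌊2/3 * u⌋ ∧ 2 * ⌊u⌋ - 3 * ⌊2/3 * u⌋ ≤ 2 := by
  have h1 : (⌊u⌋ : ℚ) ≤ u := Int.floor_le u
  have h2 : u < ⌊u⌋ + 1 := Int.lt_floor_add_one u
  have h3 : (⌊2/3 * u⌋ : ℚ) ≤ 2/3 * u := Int.floor_le _
  have h4 : 2/3 * u < ⌊2/3 * u⌋ + 1 := Int.lt_floor_add_one _
  constructor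
  · have : (-2 : ℚ) < 2 * ⌊u⌋ - 3 * ⌊2/3 * u⌋ := by linarith
    have := (by exact_mod_cast this : (-2 : ℤ) < 2 * ⌊u⌋ - 3 * ⌊2/3 * u⌋)
    omega
  · have : (2 * ⌊u⌋ - 3 * ⌊2/3 * u⌋ : ℚ) < 3 := by linarith
    have := (by exact_mod_cast this : (2 * ⌊u⌋ - 3 * ⌊2/3 * u⌋ : ℤ) < 3)
    omega

/-- The explicit tiling. -/
def kariT (p : ℤ × ℤ) : KariTile :=
  ((⌊((p.1 : ℚ) + 1) * Y p.2⌋ : ℚ) - (⌊(p.1 : ℚ) * Y p.2⌋ : ℤ),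
   (⌊((p.1 : ℚ) + 1) * Y (p.2 - 1)⌋ : ℚ) - (⌊(p.1 : ℚ) * Y (p.2 - 1)⌋ : ℤ),
   ((if Y p.2 ≤ 1 then (2 : ℚ) else 2/3) * (⌊(p.1 : ℚ) * Y p.2⌋ : ℤ) -
      (⌊(p.1 : ℚ) * Y (p.2 - 1)⌋ : ℤ), !(decide (Y p.2 ≤ 1))),
   ((if Y p.2 ≤ 1 then (2 : ℚ) else 2/3) * (⌊((p.1 : ℚ) + 1) * Y p.2⌋ : ℤ) -
      (⌊((p.1 : ℚ) + 1) * Y (p.2 - 1)⌋ : ℤ), !(decide (Y p.2 ≤ 1))))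

/-- There exists a Wang tiling with Kari's 14-tile protoset. -/
theorem stmt3 : ∃ t : ℤ × ℤ → KariTile, IsKariTiling t := by
  refine ⟨kariT, ?_, ?_⟩
  · rintro ⟨i, j⟩
    obtain ⟨hS1, hS2⟩ := kS_Y j
    have hstep : Y (j - 1) = kf (Y j) := Y_step j
    by_cases hy : Y j ≤ 1
    · -- family T₂
      left
      have hY' : Y (j - 1) = 2 * Y j := by rw [hstep]; unfold kf; rw [if_pos hy]
      simp only [kariT, KariTile.n, KariTile.s, KariTile.w, KariTile.e,
        kariProtoset, Set.mem_setOf_eq, hY', if_pos hy, decide_eq_true hy]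
      refine ⟨rfl, rfl, ?_, ?_, ?_, ?_, ?_⟩
      · -- n ∈ {0,1}
        have heq : ((i : ℚ) + 1) * Y j = (i : ℚ) * Y j + Y j := by ring
        rw [heq]
        obtain ⟨hlo, hhi⟩ := floor_diff_bounds (x := (i : ℚ) * Y j) (z := Y j) (lo := 0) (hi := 1)
          (by push_cast; linarith) (by push_cast; linarith)
        set d := ⌊(i : ℚ) * Y j + Y j⌋ - ⌊(i : ℚ) * Y j⌋ with hd
        have : ((⌊(i : ℚ) * Y j + Y j⌋ : ℚ) - ⌊(i : ℚ) * Y j⌋) = (d : ℚ) := by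
          rw [hd]; push_cast; ring
        rw [this]
        interval_cases d <;> simp
      · -- s ∈ {1,2}
        have heq : ((i : ℚ) + 1) * (2 * Y j) = (i : ℚ) * (2 * Y j) + 2 * Y j := by ring
        rw [heq]
        obtain ⟨hlo, hhi⟩ := floor_diff_bounds (x := (i : ℚ) * (2 * Y j)) (z := 2 * Y j) (lo := 1) (hi := 2)
          (by push_cast; linarith) (by push_cast; linarith)
        set d := ⌊(i : ℚ) * (2 * Y j) + 2 * Y j⌋ - ⌊(i : ℚ) * (2 * Y j)⌋ with hd
        have : ((⌊(i : ℚ) * (2 * Y j) + 2 * Y j⌋ : ℚ) - ⌊(i : ℚ) * (2 * Y j)⌋) = (d : ℚ) := by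
          rw [hd]; push_cast; ring
        rw [this]
        interval_cases d <;> simp
      · -- w ∈ {-1,0}
        have heq : (i : ℚ) * (2 * Y j) = 2 * ((i : ℚ) * Y j) := by ring
        rw [heq]
        obtain ⟨hlo, hhi⟩ := carry2 ((i : ℚ) * Y j)
        set c := 2 * ⌊(i : ℚ) * Y j⌋ - ⌊2 * ((i : ℚ) * Y j)⌋ with hc
        have : (2 : ℚ) * ⌊(i : ℚ) * Y j⌋ - ⌊2 * ((i : ℚ) * Y j)⌋ = (c : ℚ) := by
          rw [hc]; push_cast; ring
        rw [this]
        interval_cases c <;> simp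
      · -- e ∈ {-1,0}
        have heq : ((i : ℚ) + 1) * (2 * Y j) = 2 * (((i : ℚ) + 1) * Y j) := by ring
        rw [heq]
        obtain ⟨hlo, hhi⟩ := carry2 (((i : ℚ) + 1) * Y j)
        set c := 2 * ⌊((i : ℚ) + 1) * Y j⌋ - ⌊2 * (((i : ℚ) + 1) * Y j)⌋ with hc
        have : (2 : ℚ) * ⌊((i : ℚ) + 1) * Y j⌋ - ⌊2 * (((i : ℚ) + 1) * Y j)⌋ = (c : ℚ) := by
          rw [hc]; push_cast; ring
        rw [this]
        interval_cases c <;> simp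
      · ring
    · -- family T₂/₃
      right
      have hy1 : 1 < Y j := lt_of_not_ge hy
      have hY' : Y (j - 1) = 2/3 * Y j := by rw [hstep]; unfold kf; rw [if_neg hy]
      simp only [kariT, KariTile.n, KariTile.s, KariTile.w, KariTile.e,
        kariProtoset, Set.mem_setOf_eq, hY', if_neg hy, decide_eq_false hy]
      refine ⟨rfl, rfl, ?_, ?_, ?_, ?_, ?_⟩
      · -- n ∈ {1,2}
        have heq : ((i : ℚ) + 1) * Y j = (i : ℚ) * Y j + Y j := by ring
        rw [heq]
        obtain ⟨hlo, hhi⟩ := floor_diff_bounds (x := (i : ℚ) * Y j) (z := Y j) (lo := 1) (hi := 2)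
          (by push_cast; linarith) (by push_cast; linarith)
        set d := ⌊(i : ℚ) * Y j + Y j⌋ - ⌊(i : ℚ) * Y j⌋ with hd
        have : ((⌊(i : ℚ) * Y j + Y j⌋ : ℚ) - ⌊(i : ℚ) * Y j⌋) = (d : ℚ) := by
          rw [hd]; push_cast; ring
        rw [this]
        interval_cases d <;> simp
      · -- s ∈ {0,1,2}
        have heq : ((i : ℚ) + 1) * (2/3 * Y j) = (i : ℚ) * (2/3 * Y j) + 2/3 * Y j := by ring
        rw [heq]
        obtain ⟨hlo, hhi⟩ := floor_diff_bounds (x := (i : ℚ) * (2/3 * Y j)) (z := 2/3 * Y j) (lo := 0) (hi := 2)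
          (by push_cast; linarith) (by push_cast; linarith)
        set d := ⌊(i : ℚ) * (2/3 * Y j) + 2/3 * Y j⌋ - ⌊(i : ℚ) * (2/3 * Y j)⌋ with hd
        have : ((⌊(i : ℚ) * (2/3 * Y j) + 2/3 * Y j⌋ : ℚ) - ⌊(i : ℚ) * (2/3 * Y j)⌋) = (d : ℚ) := by
          rw [hd]; push_cast; ring
        rw [this]
        interval_cases d <;> simp
      · -- w ∈ {-1/3,0,1/3,2/3}
        have heq : (i : ℚ) * (2/3 * Y j) = 2/3 * ((i : ℚ) * Y j) := by ring
        rw [heq]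
        obtain ⟨hlo, hhi⟩ := carry23 ((i : ℚ) * Y j)
        set c := 2 * ⌊(i : ℚ) * Y j⌋ - 3 * ⌊2/3 * ((i : ℚ) * Y j)⌋ with hc
        have : (2 : ℚ)/3 * ⌊(i : ℚ) * Y j⌋ - ⌊2/3 * ((i : ℚ) * Y j)⌋ = (c : ℚ) / 3 := by
          rw [hc]; push_cast; ring
        rw [this]
        interval_cases c <;> norm_num [Set.mem_insert_iff]
      · -- e
        have heq : ((i : ℚ) + 1) * (2/3 * Y j) = 2/3 * (((i : ℚ) + 1) * Y j) := by ring
        rw [heq]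
        obtain ⟨hlo, hhi⟩ := carry23 (((i : ℚ) + 1) * Y j)
        set c := 2 * ⌊((i : ℚ) + 1) * Y j⌋ - 3 * ⌊2/3 * (((i : ℚ) + 1) * Y j)⌋ with hc
        have : (2 : ℚ)/3 * ⌊((i : ℚ) + 1) * Y j⌋ - ⌊2/3 * (((i : ℚ) + 1) * Y j)⌋ = (c : ℚ) / 3 := by
          rw [hc]; push_cast; ring
        rw [this]
        interval_cases c <;> norm_num [Set.mem_insert_iff]
      · ring
  · intro i j
    constructor
    · simp only [kariT, KariTile.e, KariTile.w]
      push_cast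
      ring_nf
    · simp only [kariT, KariTile.n, KariTile.s, add_sub_cancel_right]
end

section
/- Every Wang tiling with Kari's 14-tile protoset P is aperiodic: if t : ℤ² → P satisfies the matching conditions e(t(i,j)) = w(t(i+1,j)) and n(t(i,j)) = s(t(i,j+1)) for all (i,j) ∈ ℤ², then there is no (a,b) ∈ ℤ² ∖ {(0,0)} with t(i+a, j+b) = t(i,j) for all (i,j) ∈ ℤ². -/
open Finset

def kariMultiplier (b : Bool) : ℚ := if b then 2 / 3 else 2

namespace KariTile

variable {T : KariTile}

theorem e_snd_eq_w_snd (hT : T ∈ kariProtoset) : T.e.2 = T.w.2 := by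
  rcases hT with ⟨hw, he, -⟩ | ⟨hw, he, -⟩ <;> rw [hw, he]

theorem kariMultiplier_mul_n_add_w (hT : T ∈ kariProtoset) :
    kariMultiplier T.w.2 * T.n + T.w.1 = T.s + T.e.1 := by
  rcases hT with ⟨hw, -, -, -, -, -, h⟩ | ⟨hw, -, -, -, -, -, h⟩ <;> simpa [hw, kariMultiplier]

theorem exists_nat_n (hT : T ∈ kariProtoset) : ∃ k : ℕ, k ≤ 2 ∧ T.n = k := by
  rcases hT with ⟨-, -, hn, -⟩ | ⟨-, -, hn, -⟩ <;>
    simp only [Set.mem_insert_iff, Set.mem_singleton_iff] at hn <;>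
    rcases hn with hn | hn
  exacts [⟨0, by simp [hn]⟩, ⟨1, by simp [hn]⟩, ⟨1, by simp [hn]⟩, ⟨2, by simp [hn]⟩]

theorem n_nonneg (hT : T ∈ kariProtoset) : 0 ≤ T.n := by
  obtain ⟨k, -, hk⟩ := exists_nat_n hT
  rw [hk]; positivity

theorem n_le_two (hT : T ∈ kariProtoset) : T.n ≤ 2 := by
  obtain ⟨k, hk2, hk⟩ := exists_nat_n hT
  rw [hk]; exact_mod_cast hk2

theorem abs_w_fst_le_one (hT : T ∈ kariProtoset) : |T.w.1| ≤ 1 := by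
  rcases hT with ⟨-, -, -, -, hw, -⟩ | ⟨-, -, -, -, hw, -⟩ <;>
    simp only [Set.mem_insert_iff, Set.mem_singleton_iff] at hw
  · rcases hw with hw | hw <;> rw [hw] <;> norm_num
  · rcases hw with hw | hw | hw | hw <;> rw [hw] <;> norm_num [abs_le]

theorem one_le_s_of_w_snd_false (hT : T ∈ kariProtoset) (h : T.w.2 = false) : 1 ≤ T.s := by
  rcases hT with ⟨-, -, -, hs, -⟩ | ⟨hw, -⟩
  · simp only [Set.mem_insert_iff, Set.mem_singleton_iff] at hs
    rcases hs with hs | hs <;> norm_num [hs]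
  · simp [hw] at h

theorem one_le_n_of_w_snd_true (hT : T ∈ kariProtoset) (h : T.w.2 = true) : 1 ≤ T.n := by
  rcases hT with ⟨hw, -⟩ | ⟨-, -, hn, -⟩
  · simp [hw] at h
  · simp only [Set.mem_insert_iff, Set.mem_singleton_iff] at hn
    rcases hn with hn | hn <;> norm_num [hn]

end KariTile

theorem two_thirds_le_kariMultiplier (b : Bool) : 2 / 3 ≤ kariMultiplier b := by
  cases b <;> norm_num [kariMultiplier]

theorem exists_three_pow_mul_prod_kariMultiplier (f : ℕ → Bool) (J : ℕ) :
    ∃ d : ℕ, 3 ^ d * ∏ k ∈ range J, kariMultiplier (f k) = 2 ^ J := by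
  induction J with
  | zero => exact ⟨0, by simp⟩
  | succ J ih =>
    obtain ⟨d, hd⟩ := ih
    rw [prod_range_succ, pow_succ, ← hd]
    cases f J
    · exact ⟨d, by simp only [kariMultiplier]; norm_num; ring⟩
    · exact ⟨d + 1, by simp only [kariMultiplier]; norm_num; ring⟩

theorem prod_kariMultiplier_ne_one (f : ℕ → Bool) {J : ℕ} (hJ : J ≠ 0) :
    ∏ k ∈ range J, kariMultiplier (f k) ≠ 1 := by
  intro h
  obtain ⟨d, hd⟩ := exists_three_pow_mul_prod_kariMultiplier f J
  rw [h, mul_one] at hd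
  have h3 : Odd (3 ^ d) := Odd.pow (by decide)
  rw [show 3 ^ d = 2 ^ J by exact_mod_cast hd, ← Nat.not_even_iff_odd] at h3
  exact h3 (Nat.even_pow.mpr ⟨even_two, hJ⟩)

def rowFamily (t : ℤ × ℤ → KariTile) (j : ℤ) : Bool := (t (0, j)).w.2

def rowSum (t : ℤ × ℤ → KariTile) (j lo : ℤ) (m : ℕ) : ℚ := ∑ i ∈ range m, (t (lo + i, j)).n

def rowFactor (t : ℤ × ℤ → KariTile) (J : ℕ) : ℚ :=
  ∏ k ∈ range J, kariMultiplier (rowFamily t (k + 1))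

theorem rowSum_add (t : ℤ × ℤ → KariTile) (j lo : ℤ) (m k : ℕ) :
    rowSum t j lo (m + k) = rowSum t j lo m + rowSum t j (lo + m) k := by
  simp only [rowSum, sum_range_add, Nat.cast_add, add_assoc]

theorem rowFactor_succ (t : ℤ × ℤ → KariTile) (J : ℕ) :
    rowFactor t (J + 1) = rowFactor t J * kariMultiplier (rowFamily t (J + 1)) := by
  rw [rowFactor, prod_range_succ, rowFactor]

theorem rowFactor_pos (t : ℤ × ℤ → KariTile) (J : ℕ) : 0 < rowFactor t J :=
  prod_pos fun k _ => lt_of_lt_of_le (by norm_num) (two_thirds_le_kariMultiplier _)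

namespace IsKariTiling

variable {t : ℤ × ℤ → KariTile}

theorem w_snd_eq_rowFamily (ht : IsKariTiling t) (i j : ℤ) : (t (i, j)).w.2 = rowFamily t j := by
  have h : Function.Periodic (fun i => (t (i, j)).w.2) 1 := fun i => by
    simp only [← (ht.2 i j).1, KariTile.e_snd_eq_w_snd (ht.1 _)]
  simpa [rowFamily] using h.int_mul_eq i

theorem n_eq (ht : IsKariTiling t) (i j : ℤ) :
    (t (i, j)).n = kariMultiplier (rowFamily t (j + 1)) * (t (i, j + 1)).n
      + (t (i, j + 1)).w.1 - (t (i + 1, j + 1)).w.1 := by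
  have h := KariTile.kariMultiplier_mul_n_add_w (ht.1 (i, j + 1))
  rw [ht.w_snd_eq_rowFamily, (ht.2 i (j + 1)).1, ← (ht.2 i j).2] at h
  linarith

theorem rowSum_eq (ht : IsKariTiling t) (j lo : ℤ) (m : ℕ) :
    rowSum t j lo m = kariMultiplier (rowFamily t (j + 1)) * rowSum t (j + 1) lo m
      + (t (lo, j + 1)).w.1 - (t (lo + m, j + 1)).w.1 := by
  have htel := sum_range_sub (fun k : ℕ => (t (lo + k, j + 1)).w.1) m
  simp only [Nat.cast_add, Nat.cast_one, Nat.cast_zero, add_zero, ← add_assoc,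
    sum_sub_distrib] at htel
  rw [rowSum, rowSum, sum_congr rfl fun (i : ℕ) _ => ht.n_eq (lo + i) j]
  simp only [sum_sub_distrib, sum_add_distrib, ← mul_sum]
  linarith

theorem rowSum_zero_eq (ht : IsKariTiling t) (lo : ℤ) (m J : ℕ) :
    rowSum t 0 lo m = rowFactor t J * rowSum t J lo m
      + ∑ k ∈ range J, rowFactor t k * ((t (lo, k + 1)).w.1 - (t (lo + m, k + 1)).w.1) := by
  induction J with
  | zero => simp [rowFactor]
  | succ J ih =>
    rw [ih, ht.rowSum_eq J lo m, sum_range_succ, rowFactor_succ]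
    push_cast
    ring

theorem abs_rowSum_zero_sub_le (ht : IsKariTiling t) (lo : ℤ) (m J : ℕ) :
    |rowSum t 0 lo m - rowFactor t J * rowSum t J lo m| ≤ ∑ k ∈ range J, rowFactor t k * 2 := by
  rw [ht.rowSum_zero_eq lo m J, add_sub_cancel_left]
  refine (abs_sum_le_sum_abs _ _).trans (sum_le_sum fun k _ => ?_)
  rw [abs_mul, abs_of_pos (rowFactor_pos t k)]
  have h₁ := KariTile.abs_w_fst_le_one (ht.1 (lo, k + 1))
  have h₂ := KariTile.abs_w_fst_le_one (ht.1 (lo + m, k + 1))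
  exact mul_le_mul_of_nonneg_left ((abs_sub _ _).trans (by linarith)) (rowFactor_pos t k).le

theorem rowSum_nonneg (ht : IsKariTiling t) (j lo : ℤ) (m : ℕ) : 0 ≤ rowSum t j lo m :=
  sum_nonneg fun _ _ => KariTile.n_nonneg (ht.1 _)

theorem rowSum_le (ht : IsKariTiling t) (j lo : ℤ) (m : ℕ) : rowSum t j lo m ≤ 2 * m := by
  simpa [rowSum, mul_comm] using
    sum_le_sum fun i (_ : i ∈ range m) => KariTile.n_le_two (ht.1 (lo + i, j))

theorem exists_nat_rowSum (ht : IsKariTiling t) (j lo : ℤ) (m : ℕ) :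
    ∃ k : ℕ, rowSum t j lo m = k := by
  choose f hf using fun ij => KariTile.exists_nat_n (ht.1 ij)
  exact ⟨∑ i ∈ range m, f (lo + i, j), by simp [rowSum, (hf _).2]⟩

theorem abs_rowSum_sub_le (ht : IsKariTiling t) (j lo lo' : ℤ) (m : ℕ) :
    |rowSum t j lo m - rowSum t j lo' m| ≤ 2 * |(lo : ℚ) - lo'| := by
  wlog h : lo ≤ lo' generalizing lo lo'
  · rw [abs_sub_comm, abs_sub_comm (lo : ℚ)]
    exact this lo' lo (le_of_not_ge h)
  obtain ⟨k, rfl⟩ := Int.le.dest h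
  have hsplit :
      rowSum t j lo k + rowSum t j (lo + k) m = rowSum t j lo m + rowSum t j (lo + m) k := by
    rw [← rowSum_add, ← rowSum_add, add_comm]
  push_cast
  rw [sub_add_cancel_left, abs_neg, Nat.abs_cast, abs_le]
  constructor <;>
    linarith [ht.rowSum_nonneg j lo k, ht.rowSum_le j lo k, ht.rowSum_nonneg j (lo + m) k,
      ht.rowSum_le j (lo + m) k]

theorem le_rowSum_or_le_rowSum_succ (ht : IsKariTiling t) (j lo : ℤ) (m : ℕ) :
    (m : ℚ) ≤ rowSum t j lo m ∨ (m : ℚ) ≤ rowSum t (j + 1) lo m := by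
  have hcard : ∀ g : ℕ → ℚ, (∀ i, 1 ≤ g i) → (m : ℚ) ≤ ∑ i ∈ range m, g i := fun g hg => by
    simpa using card_nsmul_le_sum (range m) g 1 fun i _ => hg i
  cases hfam : rowFamily t (j + 1)
  · refine .inl (hcard _ fun i => ?_)
    rw [(ht.2 _ j).2]
    exact KariTile.one_le_s_of_w_snd_false (ht.1 _) (by rw [ht.w_snd_eq_rowFamily, hfam])
  · exact .inr (hcard _ fun i =>
      KariTile.one_le_n_of_w_snd_true (ht.1 _) (by rw [ht.w_snd_eq_rowFamily, hfam]))

theorem two_thirds_mul_sub_two_le_rowSum (ht : IsKariTiling t) (j lo : ℤ) (m : ℕ) :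
    2 / 3 * m - 2 ≤ rowSum t j lo m := by
  rcases ht.le_rowSum_or_le_rowSum_succ j lo m with h | h
  · linarith [(m.cast_nonneg : (0 : ℚ) ≤ m)]
  · have hq := two_thirds_le_kariMultiplier (rowFamily t (j + 1))
    have hw₁ := KariTile.abs_w_fst_le_one (ht.1 (lo, j + 1))
    have hw₂ := KariTile.abs_w_fst_le_one (ht.1 (lo + m, j + 1))
    rw [abs_le] at hw₁ hw₂
    rw [ht.rowSum_eq]
    nlinarith

theorem exists_lt_rowSum (ht : IsKariTiling t) (j lo : ℤ) (B : ℚ) : ∃ m, B < rowSum t j lo m := by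
  obtain ⟨m, hm⟩ := exists_nat_gt (3 / 2 * (B + 2))
  exact ⟨m, by linarith [ht.two_thirds_mul_sub_two_le_rowSum j lo m]⟩

theorem not_horizontally_periodic (ht : IsKariTiling t) {p : ℕ} (hp : p ≠ 0) :
    ¬ ∀ j : ℤ, t (p, j) = t (0, j) := by
  intro hper
  have hexact : ∀ J : ℕ, rowSum t 0 0 p = rowFactor t J * rowSum t J 0 p := fun J => by
    simp [ht.rowSum_zero_eq 0 p J, hper]
  have hpos : 0 < rowSum t 0 0 p := by
    have hp' : (0 : ℚ) < p := by exact_mod_cast Nat.pos_of_ne_zero hp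
    rcases ht.le_rowSum_or_le_rowSum_succ 0 0 p with h | h
    · linarith
    · rw [hexact 1]
      exact mul_pos (rowFactor_pos t 1) (by exact_mod_cast hp'.trans_le h)
  obtain ⟨k, hk⟩ := ht.exists_nat_rowSum 0 0 p
  have hdvd : ∀ J : ℕ, 2 ^ J ∣ k := fun J => by
    obtain ⟨kJ, hkJ⟩ := ht.exists_nat_rowSum J 0 p
    obtain ⟨d, hd⟩ := exists_three_pow_mul_prod_kariMultiplier (fun k => rowFamily t (k + 1)) J
    have h : 3 ^ d * k = 2 ^ J * kJ := by
      have : (3 : ℚ) ^ d * k = 2 ^ J * kJ := by rw [← hk, ← hkJ, hexact J, ← hd, rowFactor]; ring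
      exact_mod_cast this
    exact (Nat.Coprime.pow J d (by decide)).dvd_of_dvd_mul_left ⟨kJ, h⟩
  have hk0 : k = 0 := Nat.eq_zero_of_dvd_of_lt (hdvd k) Nat.lt_two_pow_self
  rw [hk, hk0, Nat.cast_zero] at hpos
  exact lt_irrefl 0 hpos

theorem not_periodic_of_snd_ne_zero (ht : IsKariTiling t) (a : ℤ) {p : ℕ} (hp : p ≠ 0) :
    ¬ ∀ i j : ℤ, t (i + a, j + p) = t (i, j) := by
  intro hper
  set Q := rowFactor t p
  have hQ : Q ≠ 1 := prod_kariMultiplier_ne_one _ hp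
  have htranslate : ∀ m, rowSum t p 0 m = rowSum t 0 (-a) m := fun m =>
    sum_congr rfl fun i _ => by simpa [add_comm] using congrArg KariTile.n (hper (-a + i) 0)
  set C := ∑ k ∈ range p, rowFactor t k * 2 + Q * (2 * |(a : ℚ)|)
  have hbound : ∀ m, |1 - Q| * rowSum t 0 0 m ≤ C := fun m => by
    have h₁ := ht.abs_rowSum_zero_sub_le 0 m p
    have h₂ := ht.abs_rowSum_sub_le 0 (-a) 0 m
    rw [htranslate] at h₁
    rw [Int.cast_neg, Int.cast_zero, sub_zero, abs_neg] at h₂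
    calc |1 - Q| * rowSum t 0 0 m = |(1 - Q) * rowSum t 0 0 m| := by
          rw [abs_mul, abs_of_nonneg (ht.rowSum_nonneg 0 0 m)]
      _ = |(rowSum t 0 0 m - Q * rowSum t 0 (-a) m)
            + Q * (rowSum t 0 (-a) m - rowSum t 0 0 m)| := by ring_nf
      _ ≤ C := (abs_add_le _ _).trans (add_le_add h₁ ?_)
    rw [abs_mul, abs_of_pos (rowFactor_pos t p)]
    exact mul_le_mul_of_nonneg_left h₂ (rowFactor_pos t p).le
  have hQ' : 0 < |1 - Q| := abs_pos.mpr (sub_ne_zero.mpr (Ne.symm hQ))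
  obtain ⟨m, hm⟩ := ht.exists_lt_rowSum 0 0 (C / |1 - Q|)
  rw [div_lt_iff₀ hQ'] at hm
  linarith [hbound m]

end IsKariTiling

/-- Every Wang tiling with Kari's 14-tile protoset is aperiodic. -/
theorem stmt4 (t : ℤ × ℤ → KariTile) (ht : IsKariTiling t) :
    ¬ ∃ ab : ℤ × ℤ, ab ≠ (0, 0) ∧
      ∀ i j : ℤ, t (i + ab.1, j + ab.2) = t (i, j) := by
  rintro ⟨⟨a, b⟩, hab, hper⟩
  rcases eq_or_ne b 0 with rfl | hb
  · have ha : a ≠ 0 := fun ha => hab (by rw [ha])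
    refine ht.not_horizontally_periodic (Int.natAbs_ne_zero.mpr ha) fun j => ?_
    rcases Int.natAbs_eq a with h | h
    · rw [← h]; simpa using hper 0 j
    · rw [show (a.natAbs : ℤ) = -a by omega]; simpa using (hper (-a) j).symm
  · rcases Int.natAbs_eq b with h | h
    · exact ht.not_periodic_of_snd_ne_zero a (Int.natAbs_ne_zero.mpr hb) fun i j => by
        rw [← h]; exact hper i j
    · refine ht.not_periodic_of_snd_ne_zero (-a) (Int.natAbs_ne_zero.mpr hb) fun i j => ?_
      rw [show (b.natAbs : ℤ) = -b by omega]
      simpa [← sub_eq_add_neg] using (hper (i - a) (j - b)).symm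
end

section
/- Let A be a finite nonempty alphabet and F a finite set of words over A. If the subshift of finite type X_F ⊆ A^ℕ is nonempty, then X_F contains a periodic sequence, i.e. there exist a ∈ X_F and an integer p > 0 with a(n + p) = a(n) for all n ∈ ℕ. -/
/-- The word `w` occurs in the sequence `a : ℕ → A` at position `i`. -/
def OccursAt {A : Type*} (w : List A) (a : ℕ → A) (i : ℕ) : Prop :=
  ∀ s : Fin w.length, a (i + (s : ℕ)) = w.get s

/-- The subshift defined by the set `F` of forbidden words: all sequences in which
no word of `F` occurs at any position. -/
def subshiftOf {A : Type*} (F : Set (List A)) : Set (ℕ → A) :=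
  {a | ∀ w ∈ F, ∀ i : ℕ, ¬ OccursAt w a i}

/-- Looping a sequence of the subshift between two positions with equal windows
gives a periodic element of the subshift. -/
lemma loop_lemma {A : Type*} (F : Finset (List A)) (a : ℕ → A)
    (ha : a ∈ subshiftOf (F : Set (List A))) (N : ℕ)
    (hN : ∀ w ∈ F, w.length ≤ N) (i p : ℕ) (hNp : N ≤ p) (hp0 : 0 < p)
    (hw : ∀ s < N, a (i + s) = a (i + p + s)) :
    ∃ b ∈ subshiftOf (F : Set (List A)), ∃ q : ℕ, 0 < q ∧ ∀ n : ℕ, b (n + q) = b n := by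
  set b : ℕ → A := fun n => a (i + n % p) with hb
  have step : ∀ t, t < p + N → a (i + t % p) = a (i + t) := by
    intro t ht
    by_cases h : t < p
    · rw [Nat.mod_eq_of_lt h]
    · push_neg at h
      have h1 : t % p = t - p := by
        rw [Nat.mod_eq_sub_mod h, Nat.mod_eq_of_lt (by omega)]
      rw [h1]
      have := hw (t - p) (by omega)
      rw [this]
      congr 1
      omega
  refine ⟨b, ?_, p, hp0, ?_⟩
  · intro w hwF m hocc
    apply ha w hwF (i + m % p)
    intro s
    have hs := hocc s
    rw [← hs]
    have hlen : w.length ≤ N := hN w hwF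
    have hmod : (m + (s : ℕ)) % p = (m % p + (s : ℕ)) % p := by
      conv_rhs => rw [Nat.add_mod, Nat.mod_mod_of_dvd _ dvd_rfl]
      rw [Nat.add_mod]
    simp only [hb]
    rw [hmod]
    have := step (m % p + (s : ℕ)) (by
      have h1 : m % p < p := Nat.mod_lt _ hp0
      have h2 : (s : ℕ) < w.length := s.isLt
      omega)
    rw [this, Nat.add_assoc]
  · intro n
    simp only [hb, Nat.add_mod_right]

/-- Every nonempty subshift of finite type contains a periodic sequence. -/
theorem stmt10 {A : Type*} [Fintype A] [Nonempty A] (F : Finset (List A))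
    (hne : (subshiftOf (F : Set (List A))).Nonempty) :
    ∃ a ∈ subshiftOf (F : Set (List A)), ∃ p : ℕ, 0 < p ∧ ∀ n : ℕ, a (n + p) = a n := by
  obtain ⟨a, ha⟩ := hne
  set N : ℕ := F.sup List.length + 1 with hNdef
  have hN : ∀ w ∈ F, w.length ≤ N := fun w hw =>
    le_trans (Finset.le_sup hw) (Nat.le_succ _)
  have hN0 : 0 < N := Nat.succ_pos _
  -- pigeonhole on windows at positions k*N
  obtain ⟨k, l, hkl, hf⟩ :=
    Finite.exists_ne_map_eq_of_infinite (fun k : ℕ => (fun s : Fin N => a (k * N + s)))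
  have hwin : ∀ k l : ℕ, ((fun s : Fin N => a (k * N + s)) = fun s : Fin N => a (l * N + s)) →
      k < l → ∃ b ∈ subshiftOf (F : Set (List A)),
        ∃ p : ℕ, 0 < p ∧ ∀ n : ℕ, b (n + p) = b n := by
    intro k l hf hlt
    apply loop_lemma F a ha N hN (k * N) ((l - k) * N)
    · calc N = 1 * N := (one_mul N).symm
        _ ≤ (l - k) * N := Nat.mul_le_mul_right N (by omega)
    · exact Nat.mul_pos (by omega) hN0
    · intro s hs
      have h1 := congrFun hf ⟨s, hs⟩
      simp only at h1
      have hsum : k * N + (l - k) * N = l * N := by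
        rw [← Nat.add_mul]
        congr 1
        omega
      rw [h1, ← hsum]
  rcases hkl.lt_or_gt with h | h
  · exact hwin k l hf h
  · exact hwin l k hf.symm h
end

section
/- There exists a nonempty two-dimensional subshift of finite type with no periodic configuration: there exist a finite nonempty alphabet A and relations H ⊆ A × A and V ⊆ A × A such that the set X := {x : ℤ² → A : for all (i,j) ∈ ℤ², (x(i,j), x(i+1,j)) ∈ H and (x(i,j), x(i,j+1)) ∈ V} is nonempty, and no x ∈ X satisfies x(i+a, j+b) = x(i,j) for all (i,j) ∈ ℤ² for some (a,b) ∈ ℤ² ∖ {(0,0)}. -/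
/-!
Kari's multiplication tiles. A row of tiles with exponent `e` reads a sequence of digits `bot` in
`{0, 1, 2}` on its lower edge and writes a sequence `top` on its upper edge, passing integer
carries from left to right; summing the tile rule along a row, the carries telescope, so the digit
sum of the upper row is `2 / 3 ^ e` times that of the lower row, up to a bounded error.

A tiling exists: for an orbit `(y_j)` of the bijection `y ↦ 2y` (if `y < 1`), `y ↦ 2y / 3`
(otherwise) of `[2/3, 2)`, the Beatty differences `⌊(i + 1) y_j⌋ - ⌊i y_j⌋` fit together with the
carries `2 ⌊i y_j⌋ - 3 ^ e ⌊i y_{j+1}⌋`.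

No tiling is periodic. A period makes two distinct rows `u < v` have digit sums over `[0, n)` that
differ by a bound independent of `n` (for a horizontal period, because some two rows coincide). But
the rows between them multiply these sums by `2 ^ (v - u) / 3 ^ e ≠ 1`, again up to a bounded error,
and every row's digit sum over `[0, n)` is at least about `n / 3`.
-/

open Finset

noncomputable section

namespace KariTiling

lemma floor_add_sub_floor_mem_Icc (t : ℝ) {y : ℝ} (h0 : 0 ≤ y) (h2 : y < 2) :
    ⌊t + y⌋ - ⌊t⌋ ∈ Set.Icc (0 : ℤ) 2 := by
  have hmono : ⌊t⌋ ≤ ⌊t + y⌋ := Int.floor_mono (le_add_of_nonneg_right h0)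
  have hlt : ⌊t + y⌋ < ⌊t⌋ + 3 :=
    Int.floor_lt.mpr (by push_cast; linarith [Int.lt_floor_add_one t])
  constructor <;> omega

lemma one_le_floor_add_sub_floor (t : ℝ) {y : ℝ} (h1 : 1 ≤ y) : 1 ≤ ⌊t + y⌋ - ⌊t⌋ := by
  have : ⌊t⌋ + 1 ≤ ⌊t + y⌋ := Int.le_floor.mpr (by push_cast; linarith [Int.floor_le t])
  omega

lemma two_mul_floor_sub_mem_Icc (t : ℝ) {c : ℤ} (h1 : 1 ≤ c) (h3 : c ≤ 3) :
    2 * ⌊t⌋ - c * ⌊2 * t / c⌋ ∈ Set.Icc (-1 : ℤ) 2 := by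
  have hc : (0 : ℝ) < c := by exact_mod_cast h1.trans_lt' one_pos
  have hle : (c : ℝ) * ⌊2 * t / c⌋ ≤ 2 * t := by
    rw [← le_div_iff₀' hc]; exact Int.floor_le _
  have hlt : 2 * t < (c : ℝ) * (⌊2 * t / c⌋ + 1) := by
    rw [← div_lt_iff₀' hc]; exact Int.lt_floor_add_one _
  have lower : c * ⌊2 * t / c⌋ < 2 * ⌊t⌋ + 2 := by
    have : (c * ⌊2 * t / c⌋ : ℝ) < 2 * ⌊t⌋ + 2 := by linarith [Int.lt_floor_add_one t]
    exact_mod_cast this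
  have upper : 2 * ⌊t⌋ < c * ⌊2 * t / c⌋ + c := by
    have : (2 * ⌊t⌋ : ℝ) < c * ⌊2 * t / c⌋ + c := by linarith [Int.floor_le t]
    exact_mod_cast this
  constructor <;> omega

lemma abs_sum_range_add_natCast_sub_le {g : ℤ → ℤ} {M : ℤ} (hg : ∀ i, g i ∈ Set.Icc 0 M)
    (n m : ℕ) : |∑ i ∈ range n, g (i + m) - ∑ i ∈ range n, g i| ≤ M * m := by
  have h1 := sum_range_add (fun i : ℕ => g i) n m
  have h2 := sum_range_add (fun i : ℕ => g i) m n
  rw [add_comm m n] at h2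
  push_cast at h1 h2
  have hdiff : ∑ i ∈ range n, g (i + m) - ∑ i ∈ range n, g i
      = ∑ i ∈ range m, (g (n + i) - g i) := by
    rw [sum_sub_distrib]; simp only [add_comm _ (m : ℤ)]; linarith
  rw [hdiff]
  refine (abs_sum_le_sum_abs _ _).trans ?_
  refine (sum_le_sum fun i _ => abs_sub_le_iff.mpr ⟨?_, ?_⟩).trans_eq (b := ∑ _i ∈ range m, M) ?_
  · linarith [(hg (n + i)).2, (hg i).1]
  · linarith [(hg (n + i)).1, (hg i).2]
  · simp [mul_comm]

lemma abs_sum_range_add_sub_le {g : ℤ → ℤ} {M : ℤ} (hg : ∀ i, g i ∈ Set.Icc 0 M) (n : ℕ) (p : ℤ) :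
    |∑ i ∈ range n, g (i + p) - ∑ i ∈ range n, g i| ≤ M * |p| := by
  obtain ⟨m, rfl | rfl⟩ := Int.eq_nat_or_neg p
  · simpa using abs_sum_range_add_natCast_sub_le hg n m
  · have := abs_sum_range_add_natCast_sub_le (g := fun i => g (i - m)) (fun i => hg _) n m
    simp only [add_sub_cancel_right, ← sub_eq_add_neg] at this ⊢
    rwa [abs_sub_comm, abs_neg, Nat.abs_cast]

lemma two_pow_sub_three_pow_ne_zero {k : ℕ} (hk : k ≠ 0) (e : ℕ) : (2 : ℤ) ^ k - 3 ^ e ≠ 0 := by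
  have h2 : Even ((2 : ℤ) ^ k) := (even_two).pow_of_ne_zero hk
  have h3 : Odd ((3 : ℤ) ^ e) := Odd.pow (by decide)
  intro h
  rw [sub_eq_zero.mp h] at h2
  exact Int.not_even_iff_odd.mpr h3 h2

lemma three_pow_fin_two_mem_Icc (e : Fin 2) : (3 : ℤ) ^ (e : ℕ) ∈ Set.Icc 1 3 := by
  fin_cases e <;> norm_num

lemma exists_ne_forall_eq_of_horizontal_period {A : Type*} [Finite A] {x : ℤ × ℤ → A} {p : ℤ}
    (hp : p ≠ 0) (hper : ∀ i j, x (i + p, j) = x (i, j)) :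
    ∃ u v, u ≠ v ∧ ∀ i, x (i, u) = x (i, v) := by
  obtain ⟨u, v, huv, hrow⟩ :=
    Finite.exists_ne_map_eq_of_infinite fun j (i : Fin p.natAbs) => x (i, j)
  refine ⟨u, v, huv, fun i => ?_⟩
  have hmod : ∀ j, x (i, j) = x ((i % p).toNat, j) := by
    intro j
    have hperiodic : Function.Periodic (fun i => x (i, j)) p := fun i => hper i j
    rw [Int.toNat_of_nonneg (Int.emod_nonneg i hp), Int.emod_def, mul_comm]
    exact (hperiodic.sub_int_mul_eq _).symm
  have hlt : (i % p).toNat < p.natAbs := by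
    have := Int.emod_lt i hp
    omega
  rw [hmod u, hmod v]
  exact congrFun hrow ⟨_, hlt⟩

def IsAdmissible {A : Type*} (H V : Set (A × A)) (x : ℤ × ℤ → A) : Prop :=
  ∀ i j : ℤ, (x (i, j), x (i + 1, j)) ∈ H ∧ (x (i, j), x (i, j + 1)) ∈ V

def stepExp (y : ℝ) : Fin 2 := if y < 1 then 0 else 1

def mulStep : Equiv.Perm (Set.Ico (2 / 3 : ℝ) 2) where
  toFun y := ⟨2 * y / 3 ^ (stepExp y : ℕ), by
    obtain ⟨y, h1, h2⟩ := y
    unfold stepExp; split_ifs <;> constructor <;> norm_num <;> linarith⟩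
  invFun y := ⟨if (y : ℝ) < 4 / 3 then 3 * y / 2 else y / 2, by
    obtain ⟨y, h1, h2⟩ := y
    split_ifs <;> constructor <;> linarith⟩
  left_inv y := by
    obtain ⟨y, h1, h2⟩ := y
    unfold stepExp; apply Subtype.ext; dsimp only; split_ifs <;> norm_num at * <;> linarith
  right_inv y := by
    obtain ⟨y, h1, h2⟩ := y
    unfold stepExp; apply Subtype.ext; dsimp only; split_ifs <;> norm_num at * <;> linarith

def orbit (j : ℤ) : ℝ := ((mulStep ^ j) ⟨1, by norm_num⟩ : ℝ)

lemma orbit_mem (j : ℤ) : orbit j ∈ Set.Ico (2 / 3 : ℝ) 2 := Subtype.prop _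

lemma orbit_succ (j : ℤ) : orbit (j + 1) = 2 * orbit j / 3 ^ (stepExp (orbit j) : ℕ) := by
  rw [orbit, add_comm, zpow_one_add, Equiv.Perm.mul_apply]
  rfl

structure Tile where
  e : Fin 2
  bot : Set.Icc (0 : ℤ) 2
  top : Set.Icc (0 : ℤ) 2
  left : Set.Icc (-1 : ℤ) 2
  right : Set.Icc (-1 : ℤ) 2
  deriving Fintype

/-- A tile of exponent `e` multiplies by `2 / 3 ^ e`; its carries are stored multiplied by `3 ^ e`,
which makes them integers. The inequality rules out the all-zero tiling: it makes every row sum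
grow linearly (`le_three_mul_rowSum`). -/
def Tile.IsValid (t : Tile) : Prop :=
  2 * (t.bot : ℤ) + t.left = 3 ^ (t.e : ℕ) * t.top + t.right ∧ 1 ≤ (t.bot : ℤ) + t.top

def Tile.hRel : Set (Tile × Tile) := {p | p.1.IsValid ∧ p.1.e = p.2.e ∧ p.1.right = p.2.left}

def Tile.vRel : Set (Tile × Tile) := {p | p.1.top = p.2.bot}

def beatty (j i : ℤ) : ℤ := ⌊(i : ℝ) * orbit j⌋

lemma beatty_succ_sub_mem_Icc (j i : ℤ) : beatty j (i + 1) - beatty j i ∈ Set.Icc (0 : ℤ) 2 := by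
  have h := orbit_mem j
  rw [beatty, beatty, Int.cast_add, Int.cast_one, add_one_mul]
  exact floor_add_sub_floor_mem_Icc _ (by linarith [h.1]) h.2

lemma one_le_beatty_succ_sub {j : ℤ} (h : 1 ≤ orbit j) (i : ℤ) :
    1 ≤ beatty j (i + 1) - beatty j i := by
  rw [beatty, beatty, Int.cast_add, Int.cast_one, add_one_mul]
  exact one_le_floor_add_sub_floor _ h

def carry (j i : ℤ) : ℤ := 2 * beatty j i - 3 ^ (stepExp (orbit j) : ℕ) * beatty (j + 1) i

lemma carry_mem_Icc (j i : ℤ) : carry j i ∈ Set.Icc (-1 : ℤ) 2 := by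
  obtain ⟨h1, h3⟩ := three_pow_fin_two_mem_Icc (stepExp (orbit j))
  have h := two_mul_floor_sub_mem_Icc ((i : ℝ) * orbit j) h1 h3
  push_cast at h
  rwa [carry, beatty, beatty, orbit_succ, mul_div_assoc', mul_left_comm]

def beattyTiling (p : ℤ × ℤ) : Tile where
  e := stepExp (orbit p.2)
  bot := ⟨beatty p.2 (p.1 + 1) - beatty p.2 p.1, beatty_succ_sub_mem_Icc _ _⟩
  top := ⟨beatty (p.2 + 1) (p.1 + 1) - beatty (p.2 + 1) p.1, beatty_succ_sub_mem_Icc _ _⟩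
  left := ⟨carry p.2 p.1, carry_mem_Icc _ _⟩
  right := ⟨carry p.2 (p.1 + 1), carry_mem_Icc _ _⟩

lemma one_le_max_orbit (j : ℤ) : 1 ≤ orbit j ∨ 1 ≤ orbit (j + 1) := by
  rw [orbit_succ, stepExp]
  split_ifs with h
  · right; norm_num; linarith [(orbit_mem j).1]
  · left; linarith

lemma beattyTiling_isValid (i j : ℤ) : (beattyTiling (i, j)).IsValid := by
  refine ⟨by simp only [beattyTiling, carry]; ring, ?_⟩
  have hb := beatty_succ_sub_mem_Icc j i
  have ht := beatty_succ_sub_mem_Icc (j + 1) i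
  simp only [beattyTiling]
  rcases one_le_max_orbit j with h | h
  · linarith [one_le_beatty_succ_sub h i, ht.1]
  · linarith [one_le_beatty_succ_sub h i, hb.1]

lemma isAdmissible_beattyTiling : IsAdmissible Tile.hRel Tile.vRel beattyTiling :=
  fun i j => ⟨⟨beattyTiling_isValid i j, rfl, rfl⟩, rfl⟩

def rowSum (x : ℤ × ℤ → Tile) (j : ℤ) (n : ℕ) : ℤ := ∑ i ∈ range n, ((x (i, j)).bot : ℤ)

lemma rowSum_nonneg (x : ℤ × ℤ → Tile) (j : ℤ) (n : ℕ) : 0 ≤ rowSum x j n :=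
  sum_nonneg fun i _ => (x (i, j)).bot.2.1

lemma abs_rowSum_sub_le_of_shift {x : ℤ × ℤ → Tile} {j j' p : ℤ}
    (h : ∀ i, x (i + p, j') = x (i, j)) (n : ℕ) : |rowSum x j n - rowSum x j' n| ≤ 2 * |p| := by
  simpa only [rowSum, h] using abs_sum_range_add_sub_le (fun i => (x (i, j')).bot.2) n p

lemma exists_rows_close_of_periodic {x : ℤ × ℤ → Tile} {p q : ℤ} (hpq : (p, q) ≠ (0, 0))
    (hper : ∀ i j, x (i + p, j + q) = x (i, j)) :
    ∃ u v : ℤ, u ≠ v ∧ ∃ D, ∀ n, |rowSum x v n - rowSum x u n| ≤ D := by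
  by_cases hq : q = 0
  · subst hq
    obtain ⟨u, v, huv, hrow⟩ :=
      exists_ne_forall_eq_of_horizontal_period (by simpa using hpq) fun i j => by
        simpa using hper i j
    exact ⟨u, v, huv, 0, fun n => by simp [rowSum, hrow]⟩
  · exact ⟨q, 0, hq, 2 * |p|, abs_rowSum_sub_le_of_shift fun i => by simpa using hper i 0⟩

section Admissible

variable {x : ℤ × ℤ → Tile} (hx : IsAdmissible Tile.hRel Tile.vRel x)
include hx

lemma e_eq_e_zero (i j : ℤ) : (x (i, j)).e = (x (0, j)).e := by
  induction i using Int.induction_on with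
  | zero => rfl
  | succ k ih => exact (hx k j).1.2.1.symm.trans ih
  | pred k ih =>
    have h := (hx (-k - 1) j).1.2.1
    rw [sub_add_cancel] at h
    exact h.trans ih

lemma two_mul_bot_add_left (i j : ℤ) :
    2 * ((x (i, j)).bot : ℤ) + (x (i, j)).left
      = 3 ^ ((x (0, j)).e : ℕ) * (x (i, j + 1)).bot + (x (i + 1, j)).left := by
  obtain ⟨⟨hrule, -⟩, -, hright⟩ := (hx i j).1
  rw [hrule, e_eq_e_zero hx, hright, (hx i j).2]

lemma two_mul_rowSum_sub (j : ℤ) (n : ℕ) :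
    2 * rowSum x j n - 3 ^ ((x (0, j)).e : ℕ) * rowSum x (j + 1) n
      = (x (n, j)).left - (x (0, j)).left := by
  have := sum_range_sub (fun i : ℕ => ((x (i, j)).left : ℤ)) n
  push_cast at this
  rw [rowSum, rowSum, mul_sum, mul_sum, ← sum_sub_distrib, ← this]
  refine sum_congr rfl fun i _ => ?_
  linarith [two_mul_bot_add_left hx i j]

lemma abs_two_mul_rowSum_sub_le (j : ℤ) (n : ℕ) :
    |2 * rowSum x j n - 3 ^ ((x (0, j)).e : ℕ) * rowSum x (j + 1) n| ≤ 3 := by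
  rw [two_mul_rowSum_sub hx, abs_le]
  obtain ⟨hn1, hn2⟩ := (x (n, j)).left.2
  obtain ⟨h01, h02⟩ := (x (0, j)).left.2
  constructor <;> linarith

lemma le_three_mul_rowSum (j : ℤ) (n : ℕ) : (n : ℤ) ≤ 3 * rowSum x j n + 3 := by
  have hpair : (n : ℤ) ≤ rowSum x j n + rowSum x (j + 1) n := by
    have : ∑ _i ∈ range n, (1 : ℤ) ≤ rowSum x j n + rowSum x (j + 1) n := by
      rw [rowSum, rowSum, ← sum_add_distrib]
      refine sum_le_sum fun i _ => ?_
      rw [← (hx i j).2]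
      exact ((hx i j).1.1).2
    simpa using this
  have hstep := (abs_le.mp (abs_two_mul_rowSum_sub_le hx j n)).1
  have hnext : rowSum x (j + 1) n ≤ 3 ^ ((x (0, j)).e : ℕ) * rowSum x (j + 1) n :=
    le_mul_of_one_le_left (rowSum_nonneg x _ n) (three_pow_fin_two_mem_Icc _).1
  linarith

lemma exists_abs_two_pow_mul_rowSum_sub_le (j : ℤ) (k : ℕ) :
    ∃ (e : ℕ) (B : ℤ), ∀ n, |2 ^ k * rowSum x j n - 3 ^ e * rowSum x (j + k) n| ≤ B := by
  induction k with
  | zero => exact ⟨0, 0, fun n => by simp⟩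
  | succ k ih =>
    obtain ⟨e, B, hB⟩ := ih
    set d : ℕ := ((x (0, j + k)).e : ℕ)
    refine ⟨e + d, 2 * B + 3 ^ e * 3, fun n => ?_⟩
    have hsplit : 2 ^ (k + 1) * rowSum x j n - 3 ^ (e + d) * rowSum x (j + (k + 1 : ℕ)) n
        = 2 * (2 ^ k * rowSum x j n - 3 ^ e * rowSum x (j + k) n)
          + 3 ^ e * (2 * rowSum x (j + k) n - 3 ^ d * rowSum x (j + k + 1) n) := by
      rw [Nat.cast_succ, ← add_assoc]
      ring
    rw [hsplit]
    refine (abs_add_le _ _).trans ?_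
    rw [abs_mul, abs_mul, abs_two, abs_of_nonneg (by positivity : (0 : ℤ) ≤ 3 ^ e)]
    gcongr
    exacts [hB n, abs_two_mul_rowSum_sub_le hx (j + k) n]

lemma not_forall_abs_rowSum_sub_le {u v : ℤ} (huv : u < v) (D : ℤ) :
    ¬ ∀ n, |rowSum x v n - rowSum x u n| ≤ D := by
  intro hD
  obtain ⟨k, rfl⟩ : ∃ k : ℕ, v = u + k := ⟨(v - u).toNat, by omega⟩
  obtain ⟨e, B, hB⟩ := exists_abs_two_pow_mul_rowSum_sub_le hx u k
  have hk : k ≠ 0 := by omega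
  have hbound : ∀ n, rowSum x u n ≤ B + 3 ^ e * D := fun n => calc
    rowSum x u n ≤ |(2 : ℤ) ^ k - 3 ^ e| * rowSum x u n :=
      le_mul_of_one_le_left (rowSum_nonneg x u n)
        (Int.one_le_abs (two_pow_sub_three_pow_ne_zero hk e))
    _ = |(2 ^ k * rowSum x u n - 3 ^ e * rowSum x (u + k) n)
          + 3 ^ e * (rowSum x (u + k) n - rowSum x u n)| := by
      rw [← abs_of_nonneg (rowSum_nonneg x u n), ← abs_mul, abs_of_nonneg (rowSum_nonneg x u n)]
      ring_nf
    _ ≤ B + 3 ^ e * D := by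
      refine (abs_add_le _ _).trans ?_
      rw [abs_mul, abs_of_nonneg (by positivity : (0 : ℤ) ≤ 3 ^ e)]
      gcongr
      exacts [hB n, hD n]
  set C := B + 3 ^ e * D
  have := le_three_mul_rowSum hx u (3 * C + 4).toNat
  have := hbound (3 * C + 4).toNat
  omega

end Admissible

end KariTiling

end

/-- There exists a nonempty two-dimensional subshift of finite type (given by
nearest-neighbor horizontal and vertical relations) with no periodic configuration. -/
theorem stmt12 :
    ∃ (A : Type) (_ : Fintype A) (_ : Nonempty A) (H V : Set (A × A)),
      (∃ x : ℤ × ℤ → A, ∀ i j : ℤ,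
        (x (i, j), x (i + 1, j)) ∈ H ∧ (x (i, j), x (i, j + 1)) ∈ V) ∧
      (∀ x : ℤ × ℤ → A,
        (∀ i j : ℤ, (x (i, j), x (i + 1, j)) ∈ H ∧ (x (i, j), x (i, j + 1)) ∈ V) →
        ¬ ∃ ab : ℤ × ℤ, ab ≠ (0, 0) ∧
          ∀ i j : ℤ, x (i + ab.1, j + ab.2) = x (i, j)) := by
  open KariTiling in
  refine ⟨Tile, inferInstance, ⟨beattyTiling (0, 0)⟩, Tile.hRel, Tile.vRel,
    ⟨beattyTiling, isAdmissible_beattyTiling⟩, ?_⟩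
  rintro x hx ⟨⟨p, q⟩, hpq, hper⟩
  obtain ⟨u, v, huv, D, hD⟩ := exists_rows_close_of_periodic hpq hper
  rcases huv.lt_or_gt with h | h
  · exact not_forall_abs_rowSum_sub_le hx h D hD
  · exact not_forall_abs_rowSum_sub_le hx h D fun n => by rw [abs_sub_comm]; exact hD n
end

section
/- Let f₁ and f₂ be rotations of ℝ², f_k(v) = R_k(v − c_k) + c_k, where each R_k is the linear rotation by an angle θ_k not congruent to 0 modulo 2π, and suppose the centers satisfy c₁ ≠ c₂. Then the commutator f₁ ∘ f₂ ∘ f₁⁻¹ ∘ f₂⁻¹ is a translation by a nonzero vector. -/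
/-- The rotation of the plane of angle `θ` about the center `c`. -/
noncomputable def planeRot (θ : ℝ) (c : ℝ × ℝ) (v : ℝ × ℝ) : ℝ × ℝ :=
  (Real.cos θ * (v.1 - c.1) - Real.sin θ * (v.2 - c.2) + c.1,
   Real.sin θ * (v.1 - c.1) + Real.cos θ * (v.2 - c.2) + c.2)

/-- The commutator of two nontrivial rotations of the plane with distinct centers is a
translation by a nonzero vector. (The rotation of angle `−θ` about the same center is
the inverse of the rotation of angle `θ`.) -/
theorem stmt14 (θ₁ θ₂ : ℝ) (c₁ c₂ : ℝ × ℝ)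
    (h₁ : ¬ ∃ k : ℤ, θ₁ = 2 * Real.pi * (k : ℝ))
    (h₂ : ¬ ∃ k : ℤ, θ₂ = 2 * Real.pi * (k : ℝ))
    (hc : c₁ ≠ c₂) :
    ∃ u : ℝ × ℝ, u ≠ 0 ∧
      ∀ v : ℝ × ℝ,
        planeRot θ₁ c₁ (planeRot θ₂ c₂ (planeRot (-θ₁) c₁ (planeRot (-θ₂) c₂ v))) = v + u := by
  set C1 := Real.cos θ₁ with hC1
  set S1 := Real.sin θ₁ with hS1
  set C2 := Real.cos θ₂ with hC2
  set S2 := Real.sin θ₂ with hS2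
  have hsc1 : S1 ^ 2 + C1 ^ 2 = 1 := Real.sin_sq_add_cos_sq θ₁
  have hsc2 : S2 ^ 2 + C2 ^ 2 = 1 := Real.sin_sq_add_cos_sq θ₂
  set A : ℝ := (C1 - 1) * (C2 - 1) - S1 * S2 with hA
  set B : ℝ := (C1 - 1) * S2 + S1 * (C2 - 1) with hB
  refine ⟨(A * (c₁.1 - c₂.1) - B * (c₁.2 - c₂.2),
           A * (c₁.2 - c₂.2) + B * (c₁.1 - c₂.1)), ?_, ?_⟩
  · -- nonzero
    have hcos1 : C1 < 1 := by
      rcases lt_or_eq_of_le (Real.cos_le_one θ₁) with h | h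
      · exact h
      · exfalso
        rcases (Real.cos_eq_one_iff θ₁).1 h with ⟨n, hn⟩
        exact h₁ ⟨n, by linarith⟩
    have hcos2 : C2 < 1 := by
      rcases lt_or_eq_of_le (Real.cos_le_one θ₂) with h | h
      · exact h
      · exfalso
        rcases (Real.cos_eq_one_iff θ₂).1 h with ⟨n, hn⟩
        exact h₂ ⟨n, by linarith⟩
    have hd : (c₁.1 - c₂.1) ^ 2 + (c₁.2 - c₂.2) ^ 2 > 0 := by
      by_contra hle
      push_neg at hle
      have h1 : c₁.1 = c₂.1 := by nlinarith [sq_nonneg (c₁.1 - c₂.1), sq_nonneg (c₁.2 - c₂.2)]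
      have h2 : c₁.2 = c₂.2 := by nlinarith [sq_nonneg (c₁.1 - c₂.1), sq_nonneg (c₁.2 - c₂.2)]
      exact hc (Prod.ext h1 h2)
    intro h
    have h1 : A * (c₁.1 - c₂.1) - B * (c₁.2 - c₂.2) = 0 := congrArg Prod.fst h
    have h2 : A * (c₁.2 - c₂.2) + B * (c₁.1 - c₂.1) = 0 := congrArg Prod.snd h
    have key : (A * (c₁.1 - c₂.1) - B * (c₁.2 - c₂.2)) ^ 2
        + (A * (c₁.2 - c₂.2) + B * (c₁.1 - c₂.1)) ^ 2
        = (2 - 2 * C1) * (2 - 2 * C2) * ((c₁.1 - c₂.1) ^ 2 + (c₁.2 - c₂.2) ^ 2) := by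
      have m1 : ℝ := 0
      linear_combination
        ((c₂.2 ^ 2 + c₂.1 ^ 2 - 2 * c₁.2 * c₂.2 + c₁.2 ^ 2 - 2 * c₁.1 * c₂.1 + c₁.1 ^ 2)
          * (1 + S2 ^ 2 - 2 * C2 + C2 ^ 2)) * hsc1
        + (2 * (c₂.2 ^ 2 + c₂.1 ^ 2 - 2 * c₁.2 * c₂.2 + c₁.2 ^ 2 - 2 * c₁.1 * c₂.1 + c₁.1 ^ 2)
          * (1 - C1)) * hsc2
    rw [h1, h2] at key
    have p1 : (0:ℝ) < 2 - 2 * C1 := by linarith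
    have p2 : (0:ℝ) < 2 - 2 * C2 := by linarith
    nlinarith [mul_pos (mul_pos p1 p2) hd]
  · intro v
    have key1 : planeRot θ₁ c₁ (planeRot θ₂ c₂ (planeRot (-θ₁) c₁ (planeRot (-θ₂) c₂ v))) =
        (Real.cos θ₁ * ((Real.cos θ₂ * ((Real.cos (-θ₁) * ((Real.cos (-θ₂) * (v.1 - c₂.1) - Real.sin (-θ₂) * (v.2 - c₂.2) + c₂.1) - c₁.1) - Real.sin (-θ₁) * ((Real.sin (-θ₂) * (v.1 - c₂.1) + Real.cos (-θ₂) * (v.2 - c₂.2) + c₂.2) - c₁.2) + c₁.1) - c₂.1) - Real.sin θ₂ * ((Real.sin (-θ₁) * ((Real.cos (-θ₂) * (v.1 - c₂.1) - Real.sin (-θ₂) * (v.2 - c₂.2) + c₂.1) - c₁.1) + Real.cos (-θ₁) * ((Real.sin (-θ₂) * (v.1 - c₂.1) + Real.cos (-θ₂) * (v.2 - c₂.2) + c₂.2) - c₁.2) + c₁.2) - c₂.2) + c₂.1) - c₁.1) - Real.sin θ₁ * ((Real.sin θ₂ * ((Real.cos (-θ₁) * ((Real.cos (-θ₂) * (v.1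 - c₂.1) - Real.sin (-θ₂) * (v.2 - c₂.2) + c₂.1) - c₁.1) - Real.sin (-θ₁) * ((Real.sin (-θ₂) * (v.1 - c₂.1) + Real.cos (-θ₂) * (v.2 - c₂.2) + c₂.2) - c₁.2) + c₁.1) - c₂.1) + Real.cos θ₂ * ((Real.sin (-θ₁) * ((Real.cos (-θ₂) * (v.1 - c₂.1) - Real.sin (-θ₂) * (v.2 - c₂.2) + c₂.1) - c₁.1) + Real.cos (-θ₁) * ((Real.sin (-θ₂) * (v.1 - c₂.1) + Real.cos (-θ₂) * (v.2 - c₂.2) + c₂.2) - c₁.2) + c₁.2) - c₂.2) + c₂.2) - c₁.2) + c₁.1,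
        Real.sin θ₁ * ((Real.cos θ₂ * ((Real.cos (-θ₁) * ((Real.cos (-θ₂) * (v.1 - c₂.1) - Real.sin (-θ₂) * (v.2 - c₂.2) + c₂.1) - c₁.1) - Real.sin (-θ₁) * ((Real.sin (-θ₂) * (v.1 - c₂.1) + Real.cos (-θ₂) * (v.2 - c₂.2) + c₂.2) - c₁.2) + c₁.1) - c₂.1) - Real.sin θ₂ * ((Real.sin (-θ₁) * ((Real.cos (-θ₂) * (v.1 - c₂.1) - Real.sin (-θ₂) * (v.2 - c₂.2) + c₂.1) - c₁.1) + Real.cos (-θ₁) * ((Real.sin (-θ₂) * (v.1 - c₂.1) + Real.cos (-θ₂) * (v.2 - c₂.2) + c₂.2) - c₁.2) + c₁.2) - c₂.2) + c₂.1) - c₁.1) + Real.cos θ₁ * ((Real.sin θ₂ * ((Real.cos (-θ₁) * ((Real.cos (-θ₂) * (v.1 - c₂.1) - Real.sin (-θ₂) * (v.2 - c₂.2) + c₂.1) - c₁.1) - Real.sin (-θ₁) * ((Real.sin (-θ₂) * (v.1 - c₂.1) + Real.cos (-θ₂) * (v.2 - c₂.2) + c₂.2) - c₁.2) + c₁.1)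 - c₂.1) + Real.cos θ₂ * ((Real.sin (-θ₁) * ((Real.cos (-θ₂) * (v.1 - c₂.1) - Real.sin (-θ₂) * (v.2 - c₂.2) + c₂.1) - c₁.1) + Real.cos (-θ₁) * ((Real.sin (-θ₂) * (v.1 - c₂.1) + Real.cos (-θ₂) * (v.2 - c₂.2) + c₂.2) - c₁.2) + c₁.2) - c₂.2) + c₂.2) - c₁.2) + c₁.2) := by
      simp [planeRot]
    rw [key1, Real.cos_neg, Real.sin_neg, Real.cos_neg, Real.sin_neg]
    rw [Prod.ext_iff]
    constructor
    · simp only [Prod.fst_add]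
      linear_combination
        (-(S2 * c₂.2) + S2 * c₁.2 - S2 ^ 2 * c₂.1 + S2 ^ 2 * v.1 + C2 * c₂.1 - C2 * c₁.1
          - C2 ^ 2 * c₂.1 + C2 ^ 2 * v.1) * hsc1
        + (v.1 - c₂.1) * hsc2
    · simp only [Prod.snd_add]
      linear_combination
        (S2 * c₂.1 - S2 * c₁.1 - S2 ^ 2 * c₂.2 + S2 ^ 2 * v.2 + C2 * c₂.2 - C2 * c₁.2
          - C2 ^ 2 * c₂.2 + C2 ^ 2 * v.2) * hsc1
        + (v.2 - c₂.2) * hsc2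
end

section
/- Let n ≥ 3 be an integer and let ζ = e^{2πi/n} ∈ ℂ. If n ∉ {3, 4, 6}, then the subring ℤ[ζ] of ℂ (the set of integer combinations of powers of ζ), viewed as a subset of ℂ ≅ ℝ², is dense in ℂ. If n ∈ {3, 4, 6}, then ℤ[ζ] is a lattice in ℂ ≅ ℝ², i.e. a discrete subgroup of the form ℤv₁ + ℤv₂ with v₁, v₂ linearly independent over ℝ. -/
/-- The set of integer combinations of powers of `ζ`. -/
def intPowerComb (ζ : ℂ) : Set ℂ :=
  {z | ∃ f : ℕ →₀ ℤ, z = f.sum fun j c => (c : ℂ) * ζ ^ j}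

noncomputable def pcHom (ζ : ℂ) : (ℕ →₀ ℤ) →+ ℂ :=
  Finsupp.liftAddHom fun j => (AddMonoidHom.mulRight (ζ ^ j)).comp (Int.castAddHom ℂ)

lemma intPowerComb_eq (ζ : ℂ) : intPowerComb ζ = ((pcHom ζ).range : Set ℂ) := by
  ext z
  simp only [intPowerComb, Set.mem_setOf_eq, AddMonoidHom.mem_range, pcHom,
    Finsupp.liftAddHom_apply, AddMonoidHom.coe_comp, AddMonoidHom.coe_mulRight,
    Int.coe_castAddHom, Function.comp_def, eq_comm, SetLike.mem_coe]

lemma mem_pc (ζ : ℂ) (c : ℤ) (j : ℕ) : (c : ℂ) * ζ ^ j ∈ (pcHom ζ).range :=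
  ⟨Finsupp.single j c, by simp [pcHom, Finsupp.liftAddHom_apply_single]⟩

lemma li_of_im {ζ : ℂ} (h : ζ.im ≠ 0) : LinearIndependent ℝ ![(1 : ℂ), ζ] := by
  rw [LinearIndependent.pair_iff]
  intro s t hst
  have h1 := congrArg Complex.im hst
  have h2 := congrArg Complex.re hst
  simp [Complex.add_im, Complex.add_re, Complex.smul_im, Complex.smul_re] at h1 h2
  have ht : t = 0 := by
    rcases h1 with h1 | h1
    · exact h1
    · exact absurd h1 h
  subst ht
  simp at h2
  exact ⟨h2, rfl⟩

lemma lattice_case (ζ : ℂ) (p q : ℤ) (hsq : ζ ^ 2 = (p : ℂ) + (q : ℂ) * ζ) :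
    intPowerComb ζ = {z | ∃ a b : ℤ, z = a • (1 : ℂ) + b • ζ} := by
  rw [intPowerComb_eq]
  have hpow : ∀ j : ℕ, ∃ a b : ℤ, ζ ^ j = (a : ℂ) + (b : ℂ) * ζ := by
    intro j
    induction j with
    | zero => exact ⟨1, 0, by simp⟩
    | succ k ih =>
      obtain ⟨a, b, h⟩ := ih
      refine ⟨b * p, a + b * q, ?_⟩
      rw [pow_succ, h]
      push_cast
      linear_combination (b : ℂ) * hsq
  let K : AddSubgroup ℂ := {
    carrier := {z | ∃ a b : ℤ, z = (a : ℂ) + (b : ℂ) * ζ}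
    add_mem' := by rintro _ _ ⟨a, b, rfl⟩ ⟨c, d, rfl⟩; exact ⟨a + c, b + d, by push_cast; ring⟩
    zero_mem' := ⟨0, 0, by simp⟩
    neg_mem' := by rintro _ ⟨a, b, rfl⟩; exact ⟨-a, -b, by push_cast; ring⟩ }
  ext z
  constructor
  · rintro ⟨f, rfl⟩
    have hmem : pcHom ζ f ∈ K := by
      rw [pcHom, Finsupp.liftAddHom_apply, Finsupp.sum]
      refine sum_mem fun j _ => ?_
      obtain ⟨a, b, h⟩ := hpow j
      refine ⟨f j * a, f j * b, ?_⟩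
      simp only [AddMonoidHom.coe_comp, AddMonoidHom.coe_mulRight, Int.coe_castAddHom,
        Function.comp_apply, h]
      push_cast
      ring
    obtain ⟨a, b, h⟩ := hmem
    exact ⟨a, b, by simpa [zsmul_eq_mul] using h⟩
  · rintro ⟨a, b, rfl⟩
    have := add_mem (mem_pc ζ a 0) (mem_pc ζ b 1)
    simpa [zsmul_eq_mul] using this

/-- For `ζ = e^{2πi/n}` (`n ≥ 3`): if `n ∉ {3,4,6}` the cyclotomic ring `ℤ[ζ]` is dense
in `ℂ ≅ ℝ²`; if `n ∈ {3,4,6}` it is a lattice `ℤv₁ + ℤv₂` with `v₁, v₂` linearly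
independent over `ℝ`. -/
theorem stmt17 (n : ℕ) (hn : 3 ≤ n) (ζ : ℂ)
    (hζ : ζ = Complex.exp (2 * Real.pi * Complex.I / (n : ℂ))) :
    (n ∉ ({3, 4, 6} : Set ℕ) → Dense (intPowerComb ζ)) ∧
    (n ∈ ({3, 4, 6} : Set ℕ) → ∃ v₁ v₂ : ℂ, LinearIndependent ℝ ![v₁, v₂] ∧
      intPowerComb ζ = {z | ∃ a b : ℤ, z = a • v₁ + b • v₂}) := by
  have hn0 : (n : ℂ) ≠ 0 := Nat.cast_ne_zero.mpr (by omega)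
  have hnR : (n : ℝ) ≠ 0 := Nat.cast_ne_zero.mpr (by omega)
  have hπ := Real.pi_pos
  set θ : ℝ := 2 * Real.pi / n with hθdef
  have hθζ : ζ = Complex.exp ((θ : ℂ) * Complex.I) := by
    rw [hζ]; congr 1; rw [hθdef]; push_cast; field_simp
  have him : ζ.im = Real.sin θ := by
    rw [hθζ]; exact Complex.exp_ofReal_mul_I_im θ
  have hre : ζ.re = Real.cos θ := by
    rw [hθζ]; exact Complex.exp_ofReal_mul_I_re θ
  have hθpos : 0 < θ := by positivity
  have hθle : θ ≤ 2 * Real.pi / 3 := by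
    rw [hθdef]
    apply div_le_div_of_nonneg_left (by positivity) (by norm_num) ?_
    exact_mod_cast hn
  have hθltpi : θ < Real.pi := by nlinarith
  have himpos : 0 < ζ.im := by
    rw [him]; exact Real.sin_pos_of_pos_of_lt_pi hθpos hθltpi
  have hζn : ζ ^ n = 1 := by
    rw [hζ, ← Complex.exp_nat_mul]
    rw [show (n : ℂ) * (2 * Real.pi * Complex.I / n) = 2 * Real.pi * Complex.I by
      field_simp]
    exact Complex.exp_two_pi_mul_I
  constructor
  · -- dense case
    intro hn36
    have hζ0 : ζ ≠ 0 := by rw [hθζ]; exact Complex.exp_ne_zero _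
    have h1 : ζ ^ (n - 1) * ζ = 1 := by
      rw [← pow_succ, Nat.sub_add_cancel (by omega)]; exact hζn
    have h2 : Complex.exp (-((θ : ℂ) * Complex.I)) * ζ = 1 := by
      rw [hθζ, ← Complex.exp_add]; simp
    have hinv : ζ ^ (n - 1) = Complex.exp (-((θ : ℂ) * Complex.I)) :=
      mul_right_cancel₀ hζ0 (h1.trans h2.symm)
    set α : ℝ := 2 * Real.cos θ with hαdef
    have hαζ : ((α : ℝ) : ℂ) = ζ + ζ ^ (n - 1) := by
      rw [hinv, hθζ, hαdef]
      push_cast [Complex.ofReal_cos]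
      rw [Complex.two_cos (x := (θ : ℂ))]
      ring_nf
    have hζint : IsIntegral ℤ ζ := by
      refine ⟨Polynomial.X ^ n - Polynomial.C 1, ?_, ?_⟩
      · exact Polynomial.monic_X_pow_sub_C 1 (by omega)
      · simp [hζn]
    -- α is not rational
    have hirr : ∀ q : ℚ, (q : ℝ) ≠ α := by
      intro q hq
      have hαint : IsIntegral ℤ ((α : ℝ) : ℂ) := by
        rw [hαζ]; exact hζint.add (hζint.pow _)
      have hqint : IsIntegral ℤ q := by
        rw [← isIntegral_algebraMap_iff (B := ℂ) ((algebraMap ℚ ℂ).injective)]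
        rw [eq_ratCast (algebraMap ℚ ℂ) q]
        rw [show ((q : ℂ)) = (((q : ℝ) : ℂ)) by push_cast; ring, hq]
        exact hαint
      obtain ⟨m, hm⟩ := IsIntegrallyClosed.isIntegral_iff.mp hqint
      have hm' : (m : ℚ) = q := by rw [← hm]; simp
      have hmR : (m : ℝ) = α := by
        rw [← hq]; exact_mod_cast congrArg (fun x : ℚ => (x : ℝ)) hm'
      rw [hαdef] at hmR
      have hcos23 : Real.cos (2 * Real.pi / 3) = -(1/2) := by
        rw [show 2 * Real.pi / 3 = Real.pi - Real.pi / 3 by ring, Real.cos_pi_sub,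
          Real.cos_pi_div_three]
      have hlb : -(1/2) ≤ Real.cos θ := by
        rw [← hcos23]
        exact Real.cos_le_cos_of_nonneg_of_le_pi hθpos.le (by nlinarith) hθle
      have hub : Real.cos θ < 1 := by
        rcases lt_or_eq_of_le (Real.cos_le_one θ) with h | h
        · exact h
        · exfalso
          have h0 : θ = 0 := Real.injOn_cos ⟨hθpos.le, hθltpi.le⟩ ⟨le_refl 0, Real.pi_pos.le⟩
            (by rw [h, Real.cos_zero])
          exact hθpos.ne' h0
      have hm1 : -1 ≤ m := by
        have : (-1 : ℝ) ≤ m := by rw [hmR]; linarith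
        exact_mod_cast this
      have hm2 : m ≤ 1 := by
        have h2' : (m : ℝ) < 2 := by rw [hmR]; linarith
        have : m < 2 := by exact_mod_cast h2'
        omega
      have hmem : θ ∈ Set.Icc 0 Real.pi := ⟨hθpos.le, hθltpi.le⟩
      have hget : ∀ k : ℕ, 3 ≤ k → Real.cos θ = Real.cos (2 * Real.pi / k) → n = k := by
        intro k hk hck
        have hkR : (0:ℝ) < k := by exact_mod_cast (by omega : 0 < k)
        have hmemk : 2 * Real.pi / k ∈ Set.Icc 0 Real.pi := by
          constructor
          · positivity
          · rw [div_le_iff₀ hkR]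
            nlinarith [mul_le_mul_of_nonneg_right (by exact_mod_cast hk : (3:ℝ) ≤ (k:ℝ)) hπ.le]
        have heq := Real.injOn_cos hmem hmemk hck
        rw [hθdef] at heq
        have hk0 : ((k : ℝ)) ≠ 0 := ne_of_gt hkR
        rw [div_eq_div_iff hnR hk0] at heq
        have h2π : (2 * Real.pi) ≠ 0 := by positivity
        have hnk : ((k : ℝ)) = n := mul_left_cancel₀ h2π heq
        exact_mod_cast hnk.symm
      interval_cases m
      · refine hn36 ?_
        have h3 : n = 3 := hget 3 (by norm_num) (by
          push_cast at hmR ⊢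
          rw [hcos23]
          linarith)
        simp [h3]
      · refine hn36 ?_
        have h4 : n = 4 := hget 4 (by norm_num) (by
          push_cast at hmR ⊢
          rw [show 2 * Real.pi / 4 = Real.pi / 2 by ring, Real.cos_pi_div_two]
          linarith)
        simp [h4]
      · refine hn36 ?_
        have h6 : n = 6 := hget 6 (by norm_num) (by
          push_cast at hmR ⊢
          rw [show 2 * Real.pi / 6 = Real.pi / 3 by ring, Real.cos_pi_div_three]
          linarith)
        simp [h6]
    -- the subgroup ℤ + ℤα is dense in ℝ
    set S := (AddSubgroup.closure {1, α} : AddSubgroup ℝ) with hSdef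
    have hSd : Dense ((S : Set ℝ)) := by
      rcases S.dense_or_cyclic with h | ⟨a, ha⟩
      · exact h
      · exfalso
        have h1' : (1 : ℝ) ∈ S := AddSubgroup.subset_closure (by simp)
        have h2' : α ∈ S := AddSubgroup.subset_closure (by simp)
        rw [ha, AddSubgroup.mem_closure_singleton] at h1' h2'
        obtain ⟨k, hk⟩ := h1'
        obtain ⟨m, hm⟩ := h2'
        rw [zsmul_eq_mul] at hk hm
        have hk0 : (k : ℝ) ≠ 0 := by
          intro h
          rw [h, zero_mul] at hk
          exact one_ne_zero hk.symm
        apply hirr (m / k)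
        push_cast
        rw [div_eq_iff hk0, ← hm]
        linear_combination (-(m : ℝ)) * hk
    have hSmem : ∀ x ∈ S, ∃ a b : ℤ, x = (a : ℝ) + (b : ℝ) * α := by
      have hle : S ≤ {
          carrier := {x : ℝ | ∃ a b : ℤ, x = (a : ℝ) + (b : ℝ) * α}
          add_mem' := by
            rintro _ _ ⟨a, b, rfl⟩ ⟨c, d, rfl⟩; exact ⟨a + c, b + d, by push_cast; ring⟩
          zero_mem' := ⟨0, 0, by simp⟩
          neg_mem' := by rintro _ ⟨a, b, rfl⟩; exact ⟨-a, -b, by push_cast; ring⟩ } := by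
        rw [hSdef]
        refine AddSubgroup.closure_le _ |>.mpr ?_
        rintro x (rfl | rfl)
        · exact ⟨1, 0, by norm_num⟩
        · exact ⟨0, 1, by norm_num⟩
      exact fun x hx => hle hx
    have key : ∀ x ∈ S, ∀ y ∈ S, (x : ℂ) + (y : ℂ) * ζ ∈ (pcHom ζ).range := by
      intro x hx y hy
      obtain ⟨a, b, hxe⟩ := hSmem x hx
      obtain ⟨c, d, hye⟩ := hSmem y hy
      have hsum := add_mem (add_mem (add_mem (mem_pc ζ (a + d) 0) (mem_pc ζ (b + c) 1))
        (mem_pc ζ b (n - 1))) (mem_pc ζ d 2)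
      have heq : (x : ℂ) + (y : ℂ) * ζ =
          ((a + d : ℤ) : ℂ) * ζ ^ 0 + ((b + c : ℤ) : ℂ) * ζ ^ 1 + (b : ℂ) * ζ ^ (n - 1)
            + (d : ℂ) * ζ ^ 2 := by
        rw [hxe, hye]
        push_cast
        rw [hαζ]
        linear_combination (d : ℂ) * h1
      rw [heq]
      exact hsum
    rw [intPowerComb_eq]
    intro z
    set y : ℝ := z.im / ζ.im with hy
    set x : ℝ := z.re - y * ζ.re with hx
    have hz : z = (x : ℂ) + (y : ℂ) * ζ := by
      apply Complex.ext
      · simp [hx]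
      · simp [hx, hy]
        field_simp
    have hcont : Continuous (fun p : ℝ × ℝ => ((p.1 : ℂ) + (p.2 : ℂ) * ζ)) :=
      (Complex.continuous_ofReal.comp continuous_fst).add
        ((Complex.continuous_ofReal.comp continuous_snd).mul continuous_const)
    have hmem : ((x, y) : ℝ × ℝ) ∈ closure ((S : Set ℝ) ×ˢ (S : Set ℝ)) := by
      rw [closure_prod_eq]
      exact ⟨hSd x, hSd y⟩
    have himg : z ∈ (fun p : ℝ × ℝ => ((p.1 : ℂ) + (p.2 : ℂ) * ζ)) ''
        closure ((S : Set ℝ) ×ˢ (S : Set ℝ)) := ⟨(x, y), hmem, hz.symm⟩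
    have h2' := image_closure_subset_closure_image hcont himg
    refine closure_mono ?_ h2'
    rintro _ ⟨⟨p, q⟩, ⟨hp, hq⟩, rfl⟩
    exact key p hp q hq
  · -- lattice case
    intro hn36
    refine ⟨1, ζ, li_of_im (ne_of_gt himpos), ?_⟩
    simp only [Set.mem_insert_iff, Set.mem_singleton_iff] at hn36
    rcases hn36 with h3 | h4 | h6
    · subst h3
      have hsq : ζ ^ 2 = ((-1 : ℤ) : ℂ) + ((-1 : ℤ) : ℂ) * ζ := by
        have hne : ζ - 1 ≠ 0 := by
          intro h
          rw [sub_eq_zero] at h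
          rw [h] at himpos
          simp at himpos
        have hfac : (ζ - 1) * (ζ ^ 2 + ζ + 1) = 0 := by linear_combination hζn
        have := (mul_eq_zero.mp hfac).resolve_left hne
        push_cast
        linear_combination this
      exact lattice_case ζ (-1) (-1) hsq
    · subst h4
      have hsq : ζ ^ 2 = ((-1 : ℤ) : ℂ) + ((0 : ℤ) : ℂ) * ζ := by
        rw [hζ, ← Complex.exp_nat_mul]
        rw [show ((2 : ℕ) : ℂ) * (2 * Real.pi * Complex.I / ((4 : ℕ) : ℂ))
            = Real.pi * Complex.I by push_cast; ring]
        rw [Complex.exp_pi_mul_I]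
        push_cast; ring
      exact lattice_case ζ (-1) 0 hsq
    · subst h6
      have h3' : ζ ^ 3 = -1 := by
        rw [hζ, ← Complex.exp_nat_mul]
        rw [show ((3 : ℕ) : ℂ) * (2 * Real.pi * Complex.I / ((6 : ℕ) : ℂ))
            = Real.pi * Complex.I by push_cast; ring]
        exact Complex.exp_pi_mul_I
      have hsq : ζ ^ 2 = ((-1 : ℤ) : ℂ) + ((1 : ℤ) : ℂ) * ζ := by
        have hne : ζ + 1 ≠ 0 := by
          intro h
          have h2' := congrArg Complex.im h
          simp at h2'
          rw [h2'] at himpos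
          exact lt_irrefl _ himpos
        have hfac : (ζ + 1) * (ζ ^ 2 - ζ + 1) = 0 := by linear_combination h3'
        have := (mul_eq_zero.mp hfac).resolve_left hne
        push_cast
        linear_combination this
      exact lattice_case ζ (-1) 1 hsq
end
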